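/- arXiv:2311.06763 — 5 statements merged into one kernel-verified Lean document; each statement's English description precedes it below -/
import Mathlib

section
/- The integral operator K₁ on ℝ³ with kernel K₁(x,y) = (1 + |x| + |y|)^{−3} is bounded on Lᵖ(ℝ³) for all 1 < p < ∞. -/
open MeasureTheory Set Metric Function Real
open scoped NNReal ENNReal

noncomputable section

/- ### 1-D radial estimate -/

lemma oneD {t a : ℝ} (ht0 : 0 < t) (ht3 : t < 3) (ha : 1 ≤ a) :
    ∫⁻ r in Ioi (0:ℝ), ENNReal.ofReal (r ^ 2) *
        ENNReal.ofReal (((a + r) ^ 3)⁻¹ * (1 + r) ^ (-t))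
      ≤ ENNReal.ofReal ((1 / (3 - t) + 1 / t) * a ^ (-t)) := by
  have ha0 : (0:ℝ) < a := lt_of_lt_of_le one_pos ha
  have hsplit : Ioi (0:ℝ) = Ioc 0 a ∪ Ioi a := (Set.Ioc_union_Ioi_eq_Ioi ha0.le).symm
  rw [hsplit, lintegral_union measurableSet_Ioi (Set.Ioc_disjoint_Ioi le_rfl)]
  have part1 : ∫⁻ r in Ioc (0:ℝ) a, ENNReal.ofReal (r ^ 2) *
        ENNReal.ofReal (((a + r) ^ 3)⁻¹ * (1 + r) ^ (-t))
      ≤ ENNReal.ofReal ((1 / (3 - t)) * a ^ (-t)) := by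
    have hbound : ∀ r ∈ Ioc (0:ℝ) a, ENNReal.ofReal (r ^ 2) *
        ENNReal.ofReal (((a + r) ^ 3)⁻¹ * (1 + r) ^ (-t))
        ≤ ENNReal.ofReal ((a ^ 3)⁻¹ * r ^ (2 - t)) := by
      intro r hr
      rw [← ENNReal.ofReal_mul (by positivity)]
      apply ENNReal.ofReal_le_ofReal
      have hr0 : 0 < r := hr.1
      have h1 : ((a + r) ^ 3)⁻¹ ≤ (a ^ 3)⁻¹ := by
        apply inv_anti₀ (by positivity)
        exact pow_le_pow_left₀ ha0.le (by linarith) 3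
      have h2 : (1 + r) ^ (-t) ≤ r ^ (-t) :=
        rpow_le_rpow_of_nonpos hr0 (by linarith) (by linarith)
      calc r ^ 2 * (((a + r) ^ 3)⁻¹ * (1 + r) ^ (-t))
          ≤ r ^ 2 * ((a ^ 3)⁻¹ * r ^ (-t)) := by
            apply mul_le_mul_of_nonneg_left _ (by positivity)
            exact mul_le_mul h1 h2 (by positivity) (by positivity)
        _ = (a ^ 3)⁻¹ * r ^ (2 - t) := by
            rw [show (2 - t) = (2:ℝ) + (-t) by ring, rpow_add hr0, rpow_two,
              ← rpow_natCast r 2]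
            push_cast
            ring
    calc ∫⁻ r in Ioc (0:ℝ) a, ENNReal.ofReal (r ^ 2) *
          ENNReal.ofReal (((a + r) ^ 3)⁻¹ * (1 + r) ^ (-t))
        ≤ ∫⁻ r in Ioc (0:ℝ) a, ENNReal.ofReal ((a ^ 3)⁻¹ * r ^ (2 - t)) := by
          apply setLIntegral_mono' measurableSet_Ioc hbound
      _ = ENNReal.ofReal ((a ^ 3)⁻¹) * ∫⁻ r in Ioc (0:ℝ) a, ENNReal.ofReal (r ^ (2 - t)) := by
          rw [← lintegral_const_mul' _ _ ENNReal.ofReal_ne_top]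
          congr 1; ext r
          rw [← ENNReal.ofReal_mul (by positivity)]
      _ = ENNReal.ofReal ((a ^ 3)⁻¹) * ENNReal.ofReal (∫ r in Ioc (0:ℝ) a, r ^ (2 - t)) := by
          congr 1
          rw [← ofReal_integral_eq_lintegral_ofReal]
          · exact (intervalIntegral.intervalIntegrable_rpow' (by linarith)).1
          · filter_upwards [ae_restrict_mem measurableSet_Ioc] with r hr
            exact rpow_nonneg hr.1.le _
      _ = ENNReal.ofReal ((1 / (3 - t)) * a ^ (-t)) := by
          rw [← ENNReal.ofReal_mul (by positivity)]
          congr 1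
          rw [← intervalIntegral.integral_of_le ha0.le, integral_rpow (Or.inl (by linarith))]
          rw [Real.zero_rpow (by linarith : (2:ℝ) - t + 1 ≠ 0)]
          rw [show (a:ℝ) ^ 3 = a ^ (3:ℝ) by rw [← rpow_natCast a 3]; norm_num]
          rw [show (2:ℝ) - t + 1 = 3 - t by ring, ← Real.rpow_neg ha0.le, sub_zero]
          rw [div_eq_mul_one_div, ← mul_assoc, ← Real.rpow_add ha0]
          ring_nf
  have part2 : ∫⁻ r in Ioi a, ENNReal.ofReal (r ^ 2) *
        ENNReal.ofReal (((a + r) ^ 3)⁻¹ * (1 + r) ^ (-t))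
      ≤ ENNReal.ofReal ((1 / t) * a ^ (-t)) := by
    have hbound : ∀ r ∈ Ioi a, ENNReal.ofReal (r ^ 2) *
        ENNReal.ofReal (((a + r) ^ 3)⁻¹ * (1 + r) ^ (-t))
        ≤ ENNReal.ofReal (r ^ (-1 - t)) := by
      intro r hr
      have hr0 : (0:ℝ) < r := lt_trans ha0 hr
      rw [← ENNReal.ofReal_mul (by positivity)]
      apply ENNReal.ofReal_le_ofReal
      have h1 : ((a + r) ^ 3)⁻¹ ≤ (r ^ 3)⁻¹ := by
        apply inv_anti₀ (by positivity)
        exact pow_le_pow_left₀ hr0.le (by linarith) 3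
      have h2 : (1 + r) ^ (-t) ≤ r ^ (-t) :=
        rpow_le_rpow_of_nonpos hr0 (by linarith) (by linarith)
      calc r ^ 2 * (((a + r) ^ 3)⁻¹ * (1 + r) ^ (-t))
          ≤ r ^ 2 * ((r ^ 3)⁻¹ * r ^ (-t)) := by
            apply mul_le_mul_of_nonneg_left _ (by positivity)
            exact mul_le_mul h1 h2 (by positivity) (by positivity)
        _ = r ^ (-1 - t) := by
            rw [show ((r:ℝ)^3)⁻¹ = r ^ (-3:ℝ) by
                rw [← Real.rpow_natCast r 3, ← Real.rpow_neg hr0.le]; norm_num,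
              ← Real.rpow_natCast r 2, ← Real.rpow_add hr0, ← Real.rpow_add hr0]
            norm_num
            ring_nf
    calc ∫⁻ r in Ioi a, ENNReal.ofReal (r ^ 2) *
          ENNReal.ofReal (((a + r) ^ 3)⁻¹ * (1 + r) ^ (-t))
        ≤ ∫⁻ r in Ioi a, ENNReal.ofReal (r ^ (-1 - t)) := by
          apply setLIntegral_mono' measurableSet_Ioi hbound
      _ = ENNReal.ofReal (∫ r in Ioi a, r ^ (-1 - t)) := by
          rw [← ofReal_integral_eq_lintegral_ofReal]
          · exact integrableOn_Ioi_rpow_of_lt (by linarith) ha0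
          · filter_upwards [ae_restrict_mem measurableSet_Ioi] with r hr
            exact rpow_nonneg (le_trans ha0.le (le_of_lt hr)) _
      _ = ENNReal.ofReal ((1 / t) * a ^ (-t)) := by
          congr 1
          rw [integral_Ioi_rpow_of_lt (by linarith) ha0]
          rw [show (-1:ℝ) - t + 1 = -t by ring]
          field_simp
  calc _ ≤ ENNReal.ofReal ((1 / (3 - t)) * a ^ (-t)) + ENNReal.ofReal ((1 / t) * a ^ (-t)) :=
        add_le_add part1 part2
    _ = ENNReal.ofReal ((1 / (3 - t) + 1 / t) * a ^ (-t)) := by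
        have h3t : (0:ℝ) < 3 - t := by linarith
        rw [← ENNReal.ofReal_add
          (le_of_lt (mul_pos (div_pos one_pos h3t) (rpow_pos_of_pos ha0 _)))
          (le_of_lt (mul_pos (div_pos one_pos ht0) (rpow_pos_of_pos ha0 _)))]
        ring_nf

/- ### Polar coordinates for lower integrals -/

variable {E : Type*} [NormedAddCommGroup E] [NormedSpace ℝ E] [MeasurableSpace E]
  [Nontrivial E] [FiniteDimensional ℝ E] [BorelSpace E]
  (μ : Measure E) [μ.IsAddHaarMeasure]

local notation "dim" => Module.finrank ℝ

lemma lintegral_fun_norm_addHaar' (f : ℝ → ℝ≥0∞) (hf : Measurable f) :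
    ∫⁻ x, f ‖x‖ ∂μ = (dim E) * μ (ball 0 1) *
      ∫⁻ r in Ioi (0:ℝ), ENNReal.ofReal (r ^ (dim E - 1)) * f r := calc
  ∫⁻ x, f ‖x‖ ∂μ = ∫⁻ x in ({(0)}ᶜ : Set E), f ‖x‖ ∂μ := by
    rw [restrict_compl_singleton 0]
  _ = ∫⁻ x : ({(0)}ᶜ : Set E), f ‖x.1‖ ∂(μ.comap (↑)) :=
    (lintegral_subtype_comap (measurableSet_singleton _).compl fun a => f ‖a‖).symm
  _ = ∫⁻ z : sphere (0 : E) 1 × Ioi (0 : ℝ), f z.2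
        ∂μ.toSphere.prod (.volumeIoiPow (dim E - 1)) :=
    by
      have h := μ.measurePreserving_homeomorphUnitSphereProd.lintegral_comp
        ((hf.comp measurable_subtype_coe).comp measurable_snd)
      refine Eq.trans ?_ (h.trans rfl)
      congr 1; ext x; simp [homeomorphUnitSphereProd, homeomorphSphereProd]
  _ = μ.toSphere univ * ∫⁻ r : Ioi (0:ℝ), f r ∂(.volumeIoiPow (dim E - 1)) := by
    rw [lintegral_prod (fun z : sphere (0:E) 1 × Ioi (0:ℝ) => f ↑z.2) (((hf.comp measurable_subtype_coe).comp
      measurable_snd).aemeasurable)]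
    simp [lintegral_const, mul_comm]
  _ = (dim E) * μ (ball 0 1) * ∫⁻ r in Ioi (0:ℝ), ENNReal.ofReal (r ^ (dim E - 1)) * f r := by
    rw [μ.toSphere_apply_univ]
    congr 1
    rw [← lintegral_subtype_comap measurableSet_Ioi
      (fun r : ℝ => ENNReal.ofReal (r ^ (dim E - 1)) * f r)]
    rw [Measure.volumeIoiPow, lintegral_withDensity_eq_lintegral_mul _
      (by fun_prop) (show Measurable fun r : Ioi (0:ℝ) => f ↑r from hf.comp measurable_subtype_coe)]
    rfl

/- ### The Schur test condition for the kernel on ℝ³ -/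

noncomputable def schurC (t : ℝ) : ℝ≥0∞ :=
  3 * volume (ball (0 : EuclideanSpace ℝ (Fin 3)) 1) * ENNReal.ofReal (1 / (3 - t) + 1 / t)

lemma schurC_ne_top (t : ℝ) : schurC t ≠ ∞ := by
  have : volume (ball (0 : EuclideanSpace ℝ (Fin 3)) 1) < ∞ := measure_ball_lt_top
  exact ENNReal.mul_ne_top (ENNReal.mul_ne_top (by simp) this.ne) ENNReal.ofReal_ne_top

lemma schurCond {t : ℝ} (ht0 : 0 < t) (ht3 : t < 3) (x : EuclideanSpace ℝ (Fin 3)) :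
    ∫⁻ y : EuclideanSpace ℝ (Fin 3),
        ENNReal.ofReal (((1 + ‖x‖ + ‖y‖) ^ 3)⁻¹ * (1 + ‖y‖) ^ (-t))
      ≤ schurC t * ENNReal.ofReal ((1 + ‖x‖) ^ (-t)) := by
  set a : ℝ := 1 + ‖x‖ with ha_def
  have ha : 1 ≤ a := le_add_of_nonneg_right (norm_nonneg x)
  have hmeas : Measurable fun r : ℝ => ENNReal.ofReal (((a + r) ^ 3)⁻¹ * (1 + r) ^ (-t)) := by
    apply ENNReal.measurable_ofReal.comp
    apply Measurable.mul
    · exact ((measurable_const.add measurable_id).pow_const 3).inv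
    · fun_prop
  have hpolar := lintegral_fun_norm_addHaar' (volume : Measure (EuclideanSpace ℝ (Fin 3)))
    (fun r => ENNReal.ofReal (((a + r) ^ 3)⁻¹ * (1 + r) ^ (-t))) hmeas
  have h1 : ∫⁻ (y : EuclideanSpace ℝ (Fin 3)),
      ENNReal.ofReal (((a + ‖y‖) ^ 3)⁻¹ * (1 + ‖y‖) ^ (-t)) =
      (3:ℕ) * volume (ball (0 : EuclideanSpace ℝ (Fin 3)) 1) *
        ∫⁻ r in Ioi (0:ℝ), ENNReal.ofReal (r ^ 2) *
          ENNReal.ofReal (((a + r) ^ 3)⁻¹ * (1 + r) ^ (-t)) := by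
    simpa [finrank_euclideanSpace_fin] using hpolar
  rw [h1]
  calc (3:ℕ) * volume (ball (0 : EuclideanSpace ℝ (Fin 3)) 1) *
        ∫⁻ r in Ioi (0:ℝ), ENNReal.ofReal (r ^ 2) *
          ENNReal.ofReal (((a + r) ^ 3)⁻¹ * (1 + r) ^ (-t))
      ≤ (3:ℕ) * volume (ball (0 : EuclideanSpace ℝ (Fin 3)) 1) *
        ENNReal.ofReal ((1 / (3 - t) + 1 / t) * a ^ (-t)) :=
        mul_le_mul_right (oneD ht0 ht3 ha) _
    _ = schurC t * ENNReal.ofReal (a ^ (-t)) := by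
        rw [schurC, ENNReal.ofReal_mul
          (le_of_lt (add_pos (div_pos one_pos (by linarith)) (div_pos one_pos ht0))),
          mul_assoc]
        push_cast
        ring

/- ### The Schur test -/

abbrev E3 := EuclideanSpace ℝ (Fin 3)

def Kk (x y : E3) : ℝ≥0∞ := ENNReal.ofReal (((1 + ‖x‖ + ‖y‖) ^ 3)⁻¹)

def hw (s : ℝ) (x : E3) : ℝ≥0∞ := ENNReal.ofReal ((1 + ‖x‖) ^ (-s))

lemma hw_ne_zero (s : ℝ) (x : E3) : hw s x ≠ 0 := by
  have : (0:ℝ) < (1 + ‖x‖) ^ (-s) := rpow_pos_of_pos (by positivity) _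
  simp [hw, this, ENNReal.ofReal_pos]

lemma hw_ne_top (s : ℝ) (x : E3) : hw s x ≠ ∞ := ENNReal.ofReal_ne_top

lemma Kk_ne_zero (x y : E3) : Kk x y ≠ 0 := by
  have : (0:ℝ) < ((1 + ‖x‖ + ‖y‖) ^ 3)⁻¹ := by positivity
  simp only [Kk, ne_eq, ENNReal.ofReal_eq_zero, not_le]
  exact this

lemma Kk_ne_top (x y : E3) : Kk x y ≠ ∞ := ENNReal.ofReal_ne_top

lemma Kk_symm (x y : E3) : Kk x y = Kk y x := by
  unfold Kk; ring_nf

/-- the weight power identity. -/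
lemma hw_rpow (s u : ℝ) (x : E3) :
    hw s x ^ u = ENNReal.ofReal ((1 + ‖x‖) ^ (-(s * u))) := by
  rw [hw, ENNReal.ofReal_rpow_of_pos (rpow_pos_of_pos (by positivity) _),
    ← Real.rpow_mul (by positivity), neg_mul]

/-- Schur condition in kernel-weight form. -/
lemma schurCond' {s u : ℝ} (hsu0 : 0 < s * u) (hsu3 : s * u < 3) (x : E3) :
    ∫⁻ y : E3, Kk x y * hw s y ^ u ≤ schurC (s * u) * hw s x ^ u := by
  have h1 : ∀ y : E3, Kk x y * hw s y ^ u =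
      ENNReal.ofReal (((1 + ‖x‖ + ‖y‖) ^ 3)⁻¹ * (1 + ‖y‖) ^ (-(s * u))) := by
    intro y
    rw [hw_rpow, Kk, ← ENNReal.ofReal_mul (by positivity)]
  simp only [h1]
  rw [hw_rpow]
  exact schurCond hsu0 hsu3 x

theorem schur_main {p q s : ℝ} (hpq : p.HolderConjugate q)
    (hq0 : 0 < s * q) (hq3 : s * q < 3) (hp0 : 0 < s * p) (hp3 : s * p < 3)
    (G : E3 → ℝ≥0∞) (hG : Measurable G) (hGfin : ∀ y, G y ≠ ∞) :
    ∫⁻ x, (∫⁻ y, Kk x y * G y) ^ p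
      ≤ schurC (s * q) ^ (p / q) * schurC (s * p) * ∫⁻ y, G y ^ p := by
  have hppos : 0 < p := hpq.pos
  have hqpos : 0 < q := hpq.symm.pos
  set R : E3 → ℝ≥0∞ := fun x => ∫⁻ y, Kk x y * G y ^ p * (hw s y ^ p)⁻¹ with hR
  have hwp_ne_top : ∀ y : E3, hw s y ^ p ≠ ∞ :=
    fun y => ENNReal.rpow_ne_top_of_nonneg hppos.le (hw_ne_top s y)
  have hwp_ne_zero : ∀ y : E3, hw s y ^ p ≠ 0 := by
    intro y
    simp [ENNReal.rpow_eq_zero_iff, hw_ne_zero s y, hw_ne_top s y]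
  -- Step 1: pointwise Hölder bound
  have key : ∀ x, (∫⁻ y, Kk x y * G y) ^ p ≤
      schurC (s * q) ^ (p / q) * (hw s x ^ p * R x) := by
    intro x
    have hsplit : ∀ y, Kk x y * G y =
        (Kk x y ^ (1 / q) * hw s y) * (Kk x y ^ (1 / p) * (G y * (hw s y)⁻¹)) := by
      intro y
      have h1 : Kk x y ^ (1 / q) * Kk x y ^ (1 / p) = Kk x y := by
        rw [← ENNReal.rpow_add _ _ (Kk_ne_zero x y) (Kk_ne_top x y)]
        rw [show 1 / q + 1 / p = 1 from by
          have := hpq.inv_add_inv_eq_one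
          rw [one_div, one_div]; linarith]
        exact ENNReal.rpow_one _
      have h2 : hw s y * (hw s y)⁻¹ = 1 :=
        ENNReal.mul_inv_cancel (hw_ne_zero s y) (hw_ne_top s y)
      calc Kk x y * G y = (Kk x y ^ (1 / q) * Kk x y ^ (1 / p)) *
            ((hw s y * (hw s y)⁻¹) * G y) := by rw [h1, h2, one_mul]
        _ = _ := by ring
    have holder : ∫⁻ y, Kk x y * G y ≤
        (∫⁻ y, (Kk x y ^ (1 / q) * hw s y) ^ q) ^ (1 / q) *
        (∫⁻ y, (Kk x y ^ (1 / p) * (G y * (hw s y)⁻¹)) ^ p) ^ (1 / p) := by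
      simp only [hsplit]
      exact ENNReal.lintegral_mul_le_Lp_mul_Lq volume hpq.symm
        (by unfold Kk hw; fun_prop) (by unfold Kk hw; fun_prop)
    have e1 : ∀ y, (Kk x y ^ (1 / q) * hw s y) ^ q = Kk x y * hw s y ^ q := by
      intro y
      rw [ENNReal.mul_rpow_of_nonneg _ _ hqpos.le, ← ENNReal.rpow_mul,
        one_div_mul_cancel hqpos.ne', ENNReal.rpow_one]
    have e2 : ∀ y, (Kk x y ^ (1 / p) * (G y * (hw s y)⁻¹)) ^ p =
        Kk x y * G y ^ p * (hw s y ^ p)⁻¹ := by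
      intro y
      rw [ENNReal.mul_rpow_of_nonneg _ _ hppos.le, ← ENNReal.rpow_mul,
        one_div_mul_cancel hppos.ne', ENNReal.rpow_one,
        ENNReal.mul_rpow_of_nonneg _ _ hppos.le, ENNReal.inv_rpow, mul_assoc]
    calc (∫⁻ y, Kk x y * G y) ^ p
        ≤ ((∫⁻ y, (Kk x y ^ (1 / q) * hw s y) ^ q) ^ (1 / q) *
            (∫⁻ y, (Kk x y ^ (1 / p) * (G y * (hw s y)⁻¹)) ^ p) ^ (1 / p)) ^ p :=
          ENNReal.rpow_le_rpow holder hppos.le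
      _ = (∫⁻ y, Kk x y * hw s y ^ q) ^ (p / q) * R x := by
          simp only [e1, e2]
          rw [ENNReal.mul_rpow_of_nonneg _ _ hppos.le, ← ENNReal.rpow_mul,
            ← ENNReal.rpow_mul, one_div_mul_cancel hppos.ne', ENNReal.rpow_one,
            show 1 / q * p = p / q from by ring]
      _ ≤ (schurC (s * q) * hw s x ^ q) ^ (p / q) * R x := by
          gcongr
          exact schurCond' hq0 hq3 x
      _ = schurC (s * q) ^ (p / q) * (hw s x ^ p * R x) := by
          rw [ENNReal.mul_rpow_of_nonneg _ _ (by positivity), ← ENNReal.rpow_mul,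
            show q * (p / q) = p from by field_simp, mul_assoc]
  -- Step 2: integrate and swap
  have hmeas2 : Measurable fun z : E3 × E3 =>
      hw s z.1 ^ p * (Kk z.1 z.2 * G z.2 ^ p * (hw s z.2 ^ p)⁻¹) := by
    unfold Kk hw; fun_prop
  have step2 : ∫⁻ x, hw s x ^ p * R x ≤ schurC (s * p) * ∫⁻ y, G y ^ p := by
    have swap1 : ∫⁻ x, hw s x ^ p * R x =
        ∫⁻ y, ∫⁻ x, hw s x ^ p * (Kk x y * G y ^ p * (hw s y ^ p)⁻¹) := by
      rw [← lintegral_lintegral_swap hmeas2.aemeasurable]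
      congr 1
      ext x
      rw [hR, ← lintegral_const_mul' _ _ (hwp_ne_top x)]
    rw [swap1]
    have inner : ∀ y, ∫⁻ x, hw s x ^ p * (Kk x y * G y ^ p * (hw s y ^ p)⁻¹)
        ≤ (schurC (s * p) * hw s y ^ p) * (G y ^ p * (hw s y ^ p)⁻¹) := by
      intro y
      have hc_ne_top : G y ^ p * (hw s y ^ p)⁻¹ ≠ ∞ :=
        ENNReal.mul_ne_top (ENNReal.rpow_ne_top_of_nonneg hppos.le (hGfin y))
          (ENNReal.inv_ne_top.2 (hwp_ne_zero y))
      have rearr : ∀ x : E3, hw s x ^ p * (Kk x y * G y ^ p * (hw s y ^ p)⁻¹) =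
          (Kk y x * hw s x ^ p) * (G y ^ p * (hw s y ^ p)⁻¹) := by
        intro x; rw [Kk_symm y x]; ring
      simp only [rearr]
      rw [lintegral_mul_const' _ _ hc_ne_top]
      exact mul_le_mul_left (schurCond' hp0 hp3 y) _
    calc ∫⁻ y, ∫⁻ x, hw s x ^ p * (Kk x y * G y ^ p * (hw s y ^ p)⁻¹)
        ≤ ∫⁻ y, (schurC (s * p) * hw s y ^ p) * (G y ^ p * (hw s y ^ p)⁻¹) :=
          lintegral_mono inner
      _ = ∫⁻ y, schurC (s * p) * G y ^ p := by
          congr 1; ext y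
          calc (schurC (s * p) * hw s y ^ p) * (G y ^ p * (hw s y ^ p)⁻¹)
              = schurC (s * p) * G y ^ p * (hw s y ^ p * (hw s y ^ p)⁻¹) := by ring
            _ = schurC (s * p) * G y ^ p := by
                rw [ENNReal.mul_inv_cancel (hwp_ne_zero y) (hwp_ne_top y), mul_one]
      _ = schurC (s * p) * ∫⁻ y, G y ^ p :=
          lintegral_const_mul' _ _ (schurC_ne_top _)
  calc ∫⁻ x, (∫⁻ y, Kk x y * G y) ^ p
      ≤ ∫⁻ x, schurC (s * q) ^ (p / q) * (hw s x ^ p * R x) := lintegral_mono key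
    _ = schurC (s * q) ^ (p / q) * ∫⁻ x, hw s x ^ p * R x :=
        lintegral_const_mul' _ _
          (ENNReal.rpow_ne_top_of_nonneg (by positivity) (schurC_ne_top _))
    _ ≤ schurC (s * q) ^ (p / q) * (schurC (s * p) * ∫⁻ y, G y ^ p) :=
        mul_le_mul_right step2 _
    _ = schurC (s * q) ^ (p / q) * schurC (s * p) * ∫⁻ y, G y ^ p := by rw [mul_assoc]

/- ### Main theorem -/

/-- The integral operator on ℝ³ with kernel `(1+|x|+|y|)⁻³` is bounded on `Lᵖ(ℝ³)`
for all `1 < p < ∞`. -/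
theorem stmt_8 (p : ℝ) (hp : 1 < p) :
    ∃ C : ℝ≥0, ∀ f : EuclideanSpace ℝ (Fin 3) → ℂ, MemLp f (ENNReal.ofReal p) volume →
      eLpNorm (fun x : EuclideanSpace ℝ (Fin 3) => ∫ y : EuclideanSpace ℝ (Fin 3), f y / (((1 + ‖x‖ + ‖y‖) ^ 3 : ℝ) : ℂ) ∂volume)
          (ENNReal.ofReal p) volume
        ≤ C * eLpNorm f (ENNReal.ofReal p) volume := by
  have hp0 : 0 < p := lt_trans one_pos hp
  set q : ℝ := p / (p - 1) with hq_def
  have hpq : p.HolderConjugate q := Real.HolderConjugate.conjExponent hp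
  have hqpos : 0 < q := hpq.symm.pos
  set s : ℝ := 3 / (p + q) with hs_def
  have hpq_pos : 0 < p + q := by positivity
  have hsq0 : 0 < s * q := by positivity
  have hsq3 : s * q < 3 := by
    rw [hs_def, div_mul_eq_mul_div, div_lt_iff₀ hpq_pos]
    nlinarith
  have hsp0 : 0 < s * p := by positivity
  have hsp3 : s * p < 3 := by
    rw [hs_def, div_mul_eq_mul_div, div_lt_iff₀ hpq_pos]
    nlinarith
  set M : ℝ≥0∞ := schurC (s * q) ^ (p / q) * schurC (s * p) with hM_def
  have hM_ne_top : M ≠ ∞ :=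
    ENNReal.mul_ne_top (ENNReal.rpow_ne_top_of_nonneg (by positivity) (schurC_ne_top _))
      (schurC_ne_top _)
  have hM1p_ne_top : M ^ (1 / p) ≠ ∞ := ENNReal.rpow_ne_top_of_nonneg (by positivity) hM_ne_top
  refine ⟨(M ^ (1 / p)).toNNReal, ?_⟩
  intro f hf
  have hcoe : ((M ^ (1 / p)).toNNReal : ℝ≥0∞) = M ^ (1 / p) :=
    ENNReal.coe_toNNReal hM1p_ne_top
  set g : E3 → ℂ := hf.1.mk f with hg_def
  have hgm : StronglyMeasurable g := hf.1.stronglyMeasurable_mk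
  have hfg : f =ᵐ[volume] g := hf.1.ae_eq_mk
  set G : E3 → ℝ≥0∞ := fun y => (‖g y‖₊ : ℝ≥0∞) with hG_def
  have hGm : Measurable G := hgm.measurable.nnnorm.coe_nnreal_ennreal
  have hGfin : ∀ y, G y ≠ ∞ := fun y => ENNReal.coe_ne_top
  -- replace f by g in the operator
  have hTfg : ∀ x : E3, (∫ y : E3, f y / (((1 + ‖x‖ + ‖y‖) ^ 3 : ℝ) : ℂ) ∂volume) =
      ∫ y : E3, g y / (((1 + ‖x‖ + ‖y‖) ^ 3 : ℝ) : ℂ) ∂volume := by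
    intro x
    apply integral_congr_ae
    filter_upwards [hfg] with y hy
    rw [hy]
  have hP0 : (ENNReal.ofReal p) ≠ 0 := by
    simp [ENNReal.ofReal_eq_zero, not_le, hp0]
  have hPtop : (ENNReal.ofReal p) ≠ ∞ := ENNReal.ofReal_ne_top
  have hPto : (ENNReal.ofReal p).toReal = p := ENNReal.toReal_ofReal hp0.le
  -- pointwise kernel identity
  have hker : ∀ x y : E3, (‖g y / (((1 + ‖x‖ + ‖y‖) ^ 3 : ℝ) : ℂ)‖₊ : ℝ≥0∞) =
      Kk x y * G y := by
    intro x y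
    have hc : (0:ℝ) < (1 + ‖x‖ + ‖y‖) ^ 3 := by positivity
    rw [← enorm_eq_nnnorm, ← ofReal_norm, norm_div, Complex.norm_real,
      Real.norm_eq_abs, abs_of_pos hc, div_eq_mul_inv,
      ENNReal.ofReal_mul' (by positivity), Kk,
      ofReal_norm, enorm_eq_nnnorm, mul_comm]
  have hbound : ∀ x : E3, (‖∫ y : E3, g y / (((1 + ‖x‖ + ‖y‖) ^ 3 : ℝ) : ℂ) ∂volume‖₊ : ℝ≥0∞)
      ≤ ∫⁻ y, Kk x y * G y := by
    intro x
    calc (‖∫ y : E3, g y / (((1 + ‖x‖ + ‖y‖) ^ 3 : ℝ) : ℂ) ∂volume‖₊ : ℝ≥0∞)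
        ≤ ∫⁻ y, ‖g y / (((1 + ‖x‖ + ‖y‖) ^ 3 : ℝ) : ℂ)‖₊ ∂volume :=
          enorm_integral_le_lintegral_enorm _
      _ = ∫⁻ y, Kk x y * G y := by
          congr 1; ext y; exact hker x y
  -- main computation
  rw [eLpNorm_congr_ae (Filter.EventuallyEq.of_eq (funext hTfg)),
    eLpNorm_congr_ae hfg (μ := volume) (p := ENNReal.ofReal p)]
  rw [eLpNorm_eq_lintegral_rpow_enorm_toReal hP0 hPtop, eLpNorm_eq_lintegral_rpow_enorm_toReal hP0 hPtop,
    hPto]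
  calc (∫⁻ x, (‖∫ y : E3, g y / (((1 + ‖x‖ + ‖y‖) ^ 3 : ℝ) : ℂ) ∂volume‖₊ : ℝ≥0∞) ^ p) ^ (1/p)
      ≤ (∫⁻ x, (∫⁻ y, Kk x y * G y) ^ p) ^ (1/p) := by
        apply ENNReal.rpow_le_rpow _ (by positivity)
        apply lintegral_mono
        intro x
        exact ENNReal.rpow_le_rpow (hbound x) hp0.le
    _ ≤ (M * ∫⁻ y, G y ^ p) ^ (1/p) := by
        apply ENNReal.rpow_le_rpow _ (by positivity)
        exact schur_main hpq hsq0 hsq3 hsp0 hsp3 G hGm hGfin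
    _ = ↑(M ^ (1 / p)).toNNReal * (∫⁻ y, (‖g y‖₊ : ℝ≥0∞) ^ p) ^ (1/p) := by
        rw [ENNReal.mul_rpow_of_nonneg _ _ (by positivity), hcoe]

end
end

section
/- The integral operator K₂ on ℝ³ with kernel K₂(x,y) = (1 + |x|)^{−1} (1 + |x| + |y|)^{−2} is bounded on Lᵖ(ℝ³) for all 1 < p < 3. -/
open MeasureTheory Set Filter Metric
open scoped NNReal ENNReal Topology

noncomputable section
namespace Stmt9

variable {E : Type*} [NormedAddCommGroup E] [NormedSpace ℝ E] [MeasurableSpace E]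
  [BorelSpace E] [Nontrivial E] [FiniteDimensional ℝ E]

lemma lintegral_fun_norm (μ : Measure E) [μ.IsAddHaarMeasure] {g : ℝ → ℝ≥0∞}
    (hg : Measurable g) :
    ∫⁻ x, g ‖x‖ ∂μ = μ.toSphere univ *
      ∫⁻ r in Ioi (0:ℝ), ENNReal.ofReal (r ^ (Module.finrank ℝ E - 1)) * g r := by
  have hm2 : Measurable fun p : (sphere (0:E) 1) × (Ioi (0:ℝ)) => g ↑p.2 :=
    hg.comp (measurable_subtype_coe.comp measurable_snd)
  calc ∫⁻ x, g ‖x‖ ∂μ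
      = ∫⁻ x : ({0}ᶜ : Set E), g ‖(x : E)‖ ∂(μ.comap Subtype.val) := by
        rw [lintegral_subtype_comap (measurableSet_singleton 0).compl fun x => g ‖x‖,
          restrict_compl_singleton]
    _ = ∫⁻ p : (sphere (0:E) 1) × (Ioi (0:ℝ)), g ↑p.2
          ∂(μ.toSphere.prod (.volumeIoiPow (Module.finrank ℝ E - 1))) :=
        (lintegral_congr fun x => by simp).trans
          (μ.measurePreserving_homeomorphUnitSphereProd.lintegral_comp
            (f := fun p : (sphere (0:E) 1) × (Ioi (0:ℝ)) => g ↑p.2) hm2)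
    _ = μ.toSphere univ * ∫⁻ r : Ioi (0:ℝ), g r ∂(Measure.volumeIoiPow (Module.finrank ℝ E - 1)) := by
        rw [lintegral_prod _ hm2.aemeasurable]
        simp [lintegral_const, mul_comm]
    _ = _ := by
        rw [Measure.volumeIoiPow, lintegral_withDensity_eq_lintegral_mul _
          ((measurable_subtype_coe.pow_const _).ennreal_ofReal)
          (show Measurable fun r : Ioi (0:ℝ) => g ↑r from hg.comp measurable_subtype_coe)]
        rw [← lintegral_subtype_comap measurableSet_Ioi
          (fun r : ℝ => ENNReal.ofReal (r ^ (Module.finrank ℝ E - 1)) * g r)]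
        rfl


lemma one_dim_Ioc {c M : ℝ} (hc : -1 < c) (hM : 0 ≤ M) :
    ∫⁻ r in Ioc (0:ℝ) M, ENNReal.ofReal ((1 + r) ^ c) ≤
      ENNReal.ofReal ((1 + M) ^ (c + 1) / (c + 1)) := by
  have hco : ContinuousOn (fun r : ℝ => (1 + r) ^ c) (Icc 0 M) := by
    apply ContinuousOn.rpow_const (by fun_prop)
    intro x hx
    exact Or.inl (by nlinarith [hx.1])
  have hInt : IntegrableOn (fun r : ℝ => (1 + r) ^ c) (Ioc 0 M) volume :=
    (hco.integrableOn_Icc).mono_set Ioc_subset_Icc_self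
  rw [← ofReal_integral_eq_lintegral_ofReal hInt ?_]
  · apply ENNReal.ofReal_le_ofReal
    have hFTC : ∫ r in (0:ℝ)..M, (1 + r) ^ c = ((1+M)^(c+1) - 1) / (c+1) := by
      have hd : ∀ x ∈ uIcc (0:ℝ) M,
          HasDerivAt (fun r : ℝ => (1 + r) ^ (c+1) / (c+1)) ((1 + x) ^ c) x := by
        intro x hx
        rw [uIcc_of_le hM] at hx
        have h1x : (1:ℝ) + x ≠ 0 := by nlinarith [hx.1]
        have hD : HasDerivAt (fun r : ℝ => (1 + r) ^ (c+1))
            ((c+1) * (1 + x) ^ (c+1-1) * 1) x :=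
          (Real.hasDerivAt_rpow_const (Or.inl h1x)).comp x
            ((hasDerivAt_id x).const_add 1)
        have : HasDerivAt (fun r : ℝ => (1 + r) ^ (c+1) / (c+1)) ((c+1) * (1 + x) ^ (c+1-1) * 1 / (c+1)) x := hD.div_const (c+1)
        have hne : c + 1 ≠ 0 := by linarith
        convert this using 1
        rw [show c + 1 - 1 = c by ring]; field_simp
      have hii : IntervalIntegrable (fun r : ℝ => (1 + r) ^ c) volume 0 M := by
        rw [intervalIntegrable_iff, uIoc_of_le hM]; exact hInt
      have := intervalIntegral.integral_eq_sub_of_hasDerivAt hd hii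
      rw [this]
      norm_num
      ring
    rw [← intervalIntegral.integral_of_le hM, hFTC]
    have h1 : (0:ℝ) < c + 1 := by linarith
    gcongr
    linarith
  · filter_upwards [ae_restrict_mem measurableSet_Ioc] with x hx
    exact Real.rpow_nonneg (by linarith [hx.1]) _

lemma one_dim_Ioi {c M : ℝ} (hc : 1 < c) (hM : 0 ≤ M) :
    ∫⁻ r in Ioi M, ENNReal.ofReal ((1 + r) ^ (-c)) ≤
      ENNReal.ofReal ((1 + M) ^ (1 - c) / (c - 1)) := by
  have hd : ∀ x ∈ Ici M, HasDerivAt (fun r : ℝ => -((1 + r) ^ (1-c) / (c-1)))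
      ((1 + x) ^ (-c)) x := by
    intro x hx
    have h1x : (1:ℝ) + x ≠ 0 := by nlinarith [hx.out]
    have hD : HasDerivAt (fun r : ℝ => (1 + r) ^ (1-c))
        ((1-c) * (1 + x) ^ (1-c-1) * 1) x :=
      (Real.hasDerivAt_rpow_const (Or.inl h1x)).comp x ((hasDerivAt_id x).const_add 1)
    have : HasDerivAt (fun r : ℝ => -((1 + r) ^ (1-c) / (c-1))) (-((1-c) * (1 + x) ^ (1-c-1) * 1 / (c-1))) x := (hD.div_const (c-1)).neg
    convert this using 1
    have hne : c - 1 ≠ 0 := by linarith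
    have : 1 - c - 1 = -c := by ring
    rw [this]
    field_simp
    ring
  have hpos : ∀ x ∈ Ioi M, (0:ℝ) ≤ (1 + x) ^ (-c) := fun x hx =>
    Real.rpow_nonneg (by nlinarith [hx.out]) _
  have htend : Tendsto (fun r : ℝ => -((1 + r) ^ (1-c) / (c-1))) atTop (𝓝 0) := by
    have h0 : Tendsto (fun r : ℝ => (1 + r) ^ (-(c-1))) atTop (𝓝 0) :=
      (tendsto_rpow_neg_atTop (by linarith)).comp (tendsto_atTop_add_const_left _ 1 tendsto_id)
    have : Tendsto (fun r : ℝ => (1 + r) ^ (1-c)) atTop (𝓝 0) := by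
      convert h0 using 2; ring_nf
    simpa using (this.div_const (c-1)).neg
  have hI : IntegrableOn (fun x : ℝ => (1 + x) ^ (-c)) (Ioi M) volume :=
    integrableOn_Ioi_deriv_of_nonneg' hd hpos htend
  have hval : ∫ x in Ioi M, (1 + x) ^ (-c) = (1 + M) ^ (1-c) / (c-1) := by
    rw [integral_Ioi_of_hasDerivAt_of_nonneg' hd hpos htend]
    ring
  rw [← ofReal_integral_eq_lintegral_ofReal hI ?_]
  · rw [hval]
  · filter_upwards [ae_restrict_mem measurableSet_Ioi] with x hx
    exact hpos x hx


lemma radial {β t : ℝ} (hβ1 : 1 < β) (hβ3 : β < 3) (ht : 1 ≤ t) :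
    ∫⁻ r in Ioi (0:ℝ), ENNReal.ofReal (r ^ 2 * ((1 + r) ^ (-β) * (t + r) ^ (-(2:ℝ)))) ≤
      ENNReal.ofReal ((1 / (3 - β) + 1 / (β - 1)) * t ^ (1 - β)) := by
  have ht0 : (0:ℝ) < t := by linarith
  have hM : (0:ℝ) ≤ t - 1 := by linarith
  rw [← Ioc_union_Ioi_eq_Ioi hM, lintegral_union measurableSet_Ioi (Ioc_disjoint_Ioi le_rfl)]
  have piece1 : ∫⁻ r in Ioc (0:ℝ) (t-1),
      ENNReal.ofReal (r ^ 2 * ((1 + r) ^ (-β) * (t + r) ^ (-(2:ℝ)))) ≤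
      ENNReal.ofReal (t ^ (1-β) / (3 - β)) := by
    have step : ∫⁻ r in Ioc (0:ℝ) (t-1),
        ENNReal.ofReal (r ^ 2 * ((1 + r) ^ (-β) * (t + r) ^ (-(2:ℝ)))) ≤
        ∫⁻ r in Ioc (0:ℝ) (t-1), ENNReal.ofReal (t ^ (-(2:ℝ)) * (1 + r) ^ (2 - β)) := by
      apply setLIntegral_mono' measurableSet_Ioc
      intro r hr
      apply ENNReal.ofReal_le_ofReal
      have hr0 : (0:ℝ) ≤ r := hr.1.le
      have h1r : (0:ℝ) < 1 + r := by linarith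
      have h1 : r ^ 2 * (1 + r) ^ (-β) ≤ (1 + r) ^ (2 - β) := by
        have he : (1 + r) ^ (2 - β) = (1 + r) ^ 2 * (1 + r) ^ (-β) := by
          rw [← Real.rpow_natCast (1+r) 2, ← Real.rpow_add h1r]
          norm_num [sub_eq_add_neg]
        rw [he]
        exact mul_le_mul_of_nonneg_right (by nlinarith) (Real.rpow_nonneg h1r.le _)
      have h2 : (t + r) ^ (-(2:ℝ)) ≤ t ^ (-(2:ℝ)) :=
        Real.rpow_le_rpow_of_nonpos ht0 (by linarith) (by norm_num)
      calc r ^ 2 * ((1 + r) ^ (-β) * (t + r) ^ (-(2:ℝ)))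
          = (r ^ 2 * (1 + r) ^ (-β)) * (t + r) ^ (-(2:ℝ)) := by ring
        _ ≤ (1 + r) ^ (2 - β) * t ^ (-(2:ℝ)) := by
            apply mul_le_mul h1 h2 (Real.rpow_nonneg (by linarith) _)
              (Real.rpow_nonneg h1r.le _)
        _ = t ^ (-(2:ℝ)) * (1 + r) ^ (2 - β) := by ring
    refine step.trans ?_
    simp_rw [ENNReal.ofReal_mul (Real.rpow_nonneg ht0.le _)]
    rw [lintegral_const_mul' _ _ ENNReal.ofReal_ne_top]
    have := one_dim_Ioc (c := 2 - β) (M := t - 1) (by linarith) hM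
    calc ENNReal.ofReal (t ^ (-(2:ℝ))) * ∫⁻ r in Ioc (0:ℝ) (t-1), ENNReal.ofReal ((1 + r) ^ (2-β))
        ≤ ENNReal.ofReal (t ^ (-(2:ℝ))) * ENNReal.ofReal ((1 + (t-1)) ^ (2-β+1) / (2-β+1)) :=
          mul_le_mul_right this _
      _ = ENNReal.ofReal (t ^ (1-β) / (3 - β)) := by
          rw [← ENNReal.ofReal_mul (Real.rpow_nonneg ht0.le _)]
          congr 1
          have h1t : 1 + (t - 1) = t := by ring
          rw [h1t, show (2:ℝ) - β + 1 = 3 - β by ring]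
          rw [div_eq_mul_inv, div_eq_mul_inv, ← mul_assoc, ← Real.rpow_add ht0,
            show (-2:ℝ) + (3 - β) = 1 - β by ring]
  have piece2 : ∫⁻ r in Ioi (t-1),
      ENNReal.ofReal (r ^ 2 * ((1 + r) ^ (-β) * (t + r) ^ (-(2:ℝ)))) ≤
      ENNReal.ofReal (t ^ (1-β) / (β - 1)) := by
    have step : ∫⁻ r in Ioi (t-1),
        ENNReal.ofReal (r ^ 2 * ((1 + r) ^ (-β) * (t + r) ^ (-(2:ℝ)))) ≤
        ∫⁻ r in Ioi (t-1), ENNReal.ofReal ((1 + r) ^ (-β)) := by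
      apply setLIntegral_mono' measurableSet_Ioi
      intro r hr
      apply ENNReal.ofReal_le_ofReal
      have hr0 : (0:ℝ) ≤ r := le_trans hM hr.out.le
      have htr : (0:ℝ) < t + r := by linarith
      have hb : r ^ 2 * (t + r) ^ (-(2:ℝ)) ≤ 1 := by
        have h2 : (t + r) ^ (-(2:ℝ)) = ((t + r) ^ 2)⁻¹ := by
          rw [Real.rpow_neg htr.le, ← Real.rpow_natCast (t+r) 2]
          norm_num
        rw [h2]
        calc r ^ 2 * ((t + r) ^ 2)⁻¹ ≤ (t + r) ^ 2 * ((t + r) ^ 2)⁻¹ :=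
              mul_le_mul_of_nonneg_right (by nlinarith) (by positivity)
          _ = 1 := mul_inv_cancel₀ (by positivity)
      calc r ^ 2 * ((1 + r) ^ (-β) * (t + r) ^ (-(2:ℝ)))
          = (r ^ 2 * (t + r) ^ (-(2:ℝ))) * (1 + r) ^ (-β) := by ring
        _ ≤ 1 * (1 + r) ^ (-β) :=
            mul_le_mul_of_nonneg_right hb (Real.rpow_nonneg (by linarith) _)
        _ = (1 + r) ^ (-β) := one_mul _
    refine step.trans ?_
    have := one_dim_Ioi (c := β) (M := t - 1) hβ1 hM
    calc ∫⁻ r in Ioi (t-1), ENNReal.ofReal ((1 + r) ^ (-β))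
        ≤ ENNReal.ofReal ((1 + (t-1)) ^ (1-β) / (β-1)) := this
      _ = ENNReal.ofReal (t ^ (1-β) / (β - 1)) := by rw [show 1 + (t-1) = t by ring]
  calc _ ≤ ENNReal.ofReal (t ^ (1-β) / (3 - β)) + ENNReal.ofReal (t ^ (1-β) / (β - 1)) :=
        add_le_add piece1 piece2
    _ = ENNReal.ofReal ((1 / (3 - β) + 1 / (β - 1)) * t ^ (1 - β)) := by
        rw [← ENNReal.ofReal_add
          (div_nonneg (Real.rpow_nonneg ht0.le _) (by linarith))
          (div_nonneg (Real.rpow_nonneg ht0.le _) (by linarith))]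
        congr 1
        ring


local notation "E3" => EuclideanSpace ℝ (Fin 3)

def sConst : ℝ≥0∞ := Measure.toSphere (volume : Measure (EuclideanSpace ℝ (Fin 3))) univ

lemma sConst_ne_top : sConst ≠ ∞ := measure_ne_top _ _


lemma polar3 {g : ℝ → ℝ≥0∞} (hg : Measurable g) :
    ∫⁻ x : E3, g ‖x‖ = sConst * ∫⁻ r in Ioi (0:ℝ), ENNReal.ofReal (r ^ 2) * g r := by
  have h := lintegral_fun_norm (volume : Measure E3) hg
  have hdim : Module.finrank ℝ E3 - 1 = 2 := by
    simp [finrank_euclideanSpace]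
  rw [hdim] at h
  exact h

lemma rpow_two_inv {u : ℝ} (hu : 0 < u) : ((u ^ 2 : ℝ))⁻¹ = u ^ (-(2:ℝ)) := by
  rw [show (-(2:ℝ)) = -((2:ℕ):ℝ) by norm_num, Real.rpow_neg hu.le, Real.rpow_natCast]

lemma schur1 {b : ℝ} (hb1 : 1 < b) (hb3 : b < 3) (x : E3) :
    ∫⁻ y : E3, ENNReal.ofReal (((1 + ‖x‖) * (1 + ‖x‖ + ‖y‖) ^ 2)⁻¹ * (1 + ‖y‖) ^ (-b)) ≤
      sConst * ENNReal.ofReal ((1 / (3 - b) + 1 / (b - 1)) * (1 + ‖x‖) ^ (-b)) := by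
  set t := 1 + ‖x‖ with htdef
  have ht : 1 ≤ t := le_add_of_nonneg_right (norm_nonneg x)
  have ht0 : (0:ℝ) < t := by linarith
  have hrw : ∀ y : E3, ENNReal.ofReal ((t * (t + ‖y‖) ^ 2)⁻¹ * (1 + ‖y‖) ^ (-b))
      = ENNReal.ofReal t⁻¹ *
        (fun r : ℝ => ENNReal.ofReal ((1 + r) ^ (-b) * (t + r) ^ (-(2:ℝ)))) ‖y‖ := by
    intro y
    have htr : (0:ℝ) < t + ‖y‖ := by linarith [norm_nonneg y]
    rw [← ENNReal.ofReal_mul (by positivity)]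
    congr 1
    rw [mul_inv, ← rpow_two_inv htr]
    ring
  simp_rw [hrw]
  rw [lintegral_const_mul' _ _ ENNReal.ofReal_ne_top,
    polar3 (by fun_prop : Measurable fun r : ℝ =>
      ENNReal.ofReal ((1 + r) ^ (-b) * (t + r) ^ (-(2:ℝ))))]
  simp_rw [← ENNReal.ofReal_mul (sq_nonneg _)]
  calc ENNReal.ofReal t⁻¹ * (sConst *
        ∫⁻ r in Ioi (0:ℝ), ENNReal.ofReal (r ^ 2 * ((1 + r) ^ (-b) * (t + r) ^ (-(2:ℝ)))))
      ≤ ENNReal.ofReal t⁻¹ * (sConst *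
          ENNReal.ofReal ((1 / (3 - b) + 1 / (b - 1)) * t ^ (1 - b))) := by
        gcongr
        exact radial hb1 hb3 ht
    _ = sConst * ENNReal.ofReal ((1 / (3 - b) + 1 / (b - 1)) * t ^ (-b)) := by
        rw [← mul_assoc, mul_comm (ENNReal.ofReal t⁻¹) sConst, mul_assoc,
          ← ENNReal.ofReal_mul (by positivity)]
        congr 2
        rw [← Real.rpow_neg_one t]
        rw [show t ^ (-1:ℝ) * ((1 / (3 - b) + 1 / (b - 1)) * t ^ (1 - b))
            = (1 / (3 - b) + 1 / (b - 1)) * (t ^ (-1:ℝ) * t ^ (1 - b)) by ring,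
          ← Real.rpow_add ht0, show (-1:ℝ) + (1 - b) = -b by ring]

lemma schur2 {a : ℝ} (ha0 : 0 < a) (ha2 : a < 2) (y : E3) :
    ∫⁻ x : E3, ENNReal.ofReal (((1 + ‖x‖) * (1 + ‖x‖ + ‖y‖) ^ 2)⁻¹ * (1 + ‖x‖) ^ (-a)) ≤
      sConst * ENNReal.ofReal ((1 / (3 - (1 + a)) + 1 / ((1 + a) - 1)) * (1 + ‖y‖) ^ (-a)) := by
  set t := 1 + ‖y‖ with htdef
  have ht : 1 ≤ t := le_add_of_nonneg_right (norm_nonneg y)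
  have ht0 : (0:ℝ) < t := by linarith
  have hrw : ∀ x : E3, ENNReal.ofReal (((1 + ‖x‖) * (1 + ‖x‖ + ‖y‖) ^ 2)⁻¹ * (1 + ‖x‖) ^ (-a))
      = (fun r : ℝ => ENNReal.ofReal ((1 + r) ^ (-(1 + a)) * (t + r) ^ (-(2:ℝ)))) ‖x‖ := by
    intro x
    have h1r : (0:ℝ) < 1 + ‖x‖ := by linarith [norm_nonneg x]
    have htr : (0:ℝ) < t + ‖x‖ := by linarith [norm_nonneg x]
    congr 1
    have hxy : 1 + ‖x‖ + ‖y‖ = t + ‖x‖ := by rw [htdef]; ring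
    rw [hxy, mul_inv, ← rpow_two_inv htr]
    have h1a : ((1 + ‖x‖):ℝ)⁻¹ * (1 + ‖x‖) ^ (-a) = (1 + ‖x‖) ^ (-(1 + a)) := by
      rw [← Real.rpow_neg_one (1 + ‖x‖), ← Real.rpow_add h1r,
        show (-1:ℝ) + -a = -(1 + a) by ring]
    calc ((1 + ‖x‖):ℝ)⁻¹ * (((t + ‖x‖) ^ 2)⁻¹) * (1 + ‖x‖) ^ (-a)
        = (((1 + ‖x‖):ℝ)⁻¹ * (1 + ‖x‖) ^ (-a)) * ((t + ‖x‖) ^ 2)⁻¹ := by ring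
      _ = (1 + ‖x‖) ^ (-(1 + a)) * ((t + ‖x‖) ^ 2)⁻¹ := by rw [h1a]
  simp_rw [hrw]
  rw [polar3 (by fun_prop : Measurable fun r : ℝ =>
    ENNReal.ofReal ((1 + r) ^ (-(1 + a)) * (t + r) ^ (-(2:ℝ))))]
  simp_rw [← ENNReal.ofReal_mul (sq_nonneg _)]
  have := radial (β := 1 + a) (t := t) (by linarith) (by linarith) ht
  calc sConst * ∫⁻ r in Ioi (0:ℝ),
        ENNReal.ofReal (r ^ 2 * ((1 + r) ^ (-(1 + a)) * (t + r) ^ (-(2:ℝ))))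
      ≤ sConst * ENNReal.ofReal ((1 / (3 - (1 + a)) + 1 / ((1 + a) - 1)) * t ^ (1 - (1 + a))) := by
        gcongr
    _ = _ := by rw [show (1:ℝ) - (1 + a) = -a by ring]


lemma key {p q b a s : ℝ} (hp0 : 0 < p) (hpq : q.HolderConjugate p)
    (hb1 : 1 < b) (hb3 : b < 3) (ha0 : 0 < a) (ha2 : a < 2) (hs0 : 0 < s)
    (hsq : s * q = b) (hsp : s * p = a)
    (f : E3 → ℂ) (hm : Measurable f) :
    ∫⁻ x : E3, (‖∫ y : E3, f y / (((1 + ‖x‖) * (1 + ‖x‖ + ‖y‖) ^ 2 : ℝ) : ℂ) ∂volume‖₊ : ℝ≥0∞) ^ p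
      ≤ (sConst * ENNReal.ofReal (1/(3-b)+1/(b-1))) ^ (p/q) *
        ((sConst * ENNReal.ofReal (1/(3-(1+a))+1/((1+a)-1))) *
        ∫⁻ y : E3, (‖f y‖₊ : ℝ≥0∞) ^ p) := by
  have hq0 : 0 < q := hpq.pos
  have hq1 : 1 < q := hpq.lt
  set C1 : ℝ≥0∞ := sConst * ENNReal.ofReal (1/(3-b)+1/(b-1)) with hC1def
  set C2 : ℝ≥0∞ := sConst * ENNReal.ofReal (1/(3-(1+a))+1/((1+a)-1)) with hC2def
  have hC1top : C1 ≠ ∞ := ENNReal.mul_ne_top sConst_ne_top ENNReal.ofReal_ne_top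
  set κ : E3 → E3 → ℝ := fun x y => ((1 + ‖x‖) * (1 + ‖x‖ + ‖y‖) ^ 2)⁻¹ with hκdef
  have hκpos : ∀ x y, 0 < κ x y := by
    intro x y
    have h1 : (0:ℝ) < 1 + ‖x‖ := by linarith [norm_nonneg x]
    have h2 : (0:ℝ) < 1 + ‖x‖ + ‖y‖ := by linarith [norm_nonneg x, norm_nonneg y]
    exact inv_pos.2 (mul_pos h1 (pow_pos h2 2))
  set k : E3 → E3 → ℝ≥0∞ := fun x y => ENNReal.ofReal (κ x y) with hkdef
  have hk0 : ∀ x y, k x y ≠ 0 := fun x y => (ENNReal.ofReal_pos.2 (hκpos x y)).ne'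
  have hktop : ∀ x y, k x y ≠ ⊤ := fun x y => ENNReal.ofReal_ne_top
  set h : E3 → ℝ≥0∞ := fun y => ENNReal.ofReal ((1 + ‖y‖) ^ (-s)) with hhdef
  have hwpos : ∀ y : E3, (0:ℝ) < (1 + ‖y‖) ^ (-s) := fun y =>
    Real.rpow_pos_of_pos (by linarith [norm_nonneg y]) _
  have hh0 : ∀ y, h y ≠ 0 := fun y => (ENNReal.ofReal_pos.2 (hwpos y)).ne'
  have hhtop : ∀ y, h y ≠ ⊤ := fun y => ENNReal.ofReal_ne_top
  set F : E3 → ℝ≥0∞ := fun y => (‖f y‖₊ : ℝ≥0∞) with hFdef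
  have hFmeas : Measurable F := hm.nnnorm.coe_nnreal_ennreal
  have hhmeas : Measurable h := by fun_prop
  have hkmeas : Measurable fun z : E3 × E3 => k z.1 z.2 := by fun_prop
  have hkxmeas : ∀ x, Measurable fun y => k x y := by
    intro x; fun_prop
  -- Step A
  have stepA : ∀ x : E3,
      (‖∫ y : E3, f y / (((1 + ‖x‖) * (1 + ‖x‖ + ‖y‖) ^ 2 : ℝ) : ℂ) ∂volume‖₊ : ℝ≥0∞)
        ≤ ∫⁻ y, k x y * F y := by
    intro x
    refine le_trans (enorm_integral_le_lintegral_enorm _) (le_of_eq (lintegral_congr ?_))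
    intro y
    have hc : (0:ℝ) < (1 + ‖x‖) * (1 + ‖x‖ + ‖y‖) ^ 2 := by
      have := hκpos x y
      positivity
    have heq : ((‖f y / (((1 + ‖x‖) * (1 + ‖x‖ + ‖y‖) ^ 2 : ℝ) : ℂ)‖₊ : ℝ≥0∞)) =
        ENNReal.ofReal ((((1 + ‖x‖) * (1 + ‖x‖ + ‖y‖) ^ 2 : ℝ))⁻¹) * (‖f y‖₊ : ℝ≥0∞) := by
      rw [← enorm_eq_nnnorm, ← ofReal_norm, norm_div, Complex.norm_real, Real.norm_eq_abs,
        abs_of_pos hc, div_eq_mul_inv, mul_comm,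
        ENNReal.ofReal_mul (inv_nonneg.2 hc.le), ← enorm_eq_nnnorm, ← ofReal_norm]
    exact heq
  -- Step B : Hoelder
  set A : E3 → ℝ≥0∞ := fun x => ∫⁻ y, k x y * (h y) ^ q with hAdef
  set B : E3 → ℝ≥0∞ := fun x => ∫⁻ y, k x y * F y ^ p * ((h y)⁻¹) ^ p with hBdef
  have stepB : ∀ x, (∫⁻ y, k x y * F y) ≤ (A x) ^ (1/q) * (B x) ^ (1/p) := by
    intro x
    have hrw : (fun y => k x y * F y) =
        (fun y => (k x y) ^ (1/q) * h y) * (fun y => (k x y) ^ (1/p) * F y * (h y)⁻¹) := by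
      funext y
      have hkk : (k x y) ^ (1/q) * (k x y) ^ (1/p) = k x y := by
        rw [← ENNReal.rpow_add _ _ (hk0 x y) (hktop x y),
          show 1/q + 1/p = 1 by rw [one_div, one_div]; exact hpq.inv_add_inv_eq_one,
          ENNReal.rpow_one]
      have hhh : h y * (h y)⁻¹ = 1 := ENNReal.mul_inv_cancel (hh0 y) (hhtop y)
      calc k x y * F y = ((k x y) ^ (1/q) * (k x y) ^ (1/p)) * F y * (h y * (h y)⁻¹) := by
            rw [hkk, hhh, mul_one]
        _ = ((k x y) ^ (1/q) * h y) * ((k x y) ^ (1/p) * F y * (h y)⁻¹) := by ring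
    rw [hrw]
    have hold := ENNReal.lintegral_mul_le_Lp_mul_Lq volume hpq
      (f := fun y => (k x y) ^ (1/q) * h y) (g := fun y => (k x y) ^ (1/p) * F y * (h y)⁻¹)
      (by fun_prop) (by fun_prop)
    refine hold.trans (le_of_eq ?_)
    congr 1
    · congr 1
      apply lintegral_congr
      intro y
      rw [ENNReal.mul_rpow_of_nonneg _ _ hq0.le, ← ENNReal.rpow_mul,
        one_div_mul_cancel hq0.ne', ENNReal.rpow_one]
    · congr 1
      apply lintegral_congr
      intro y
      rw [ENNReal.mul_rpow_of_nonneg _ _ hp0.le, ENNReal.mul_rpow_of_nonneg _ _ hp0.le,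
        ← ENNReal.rpow_mul, one_div_mul_cancel hp0.ne', ENNReal.rpow_one]
  -- Step C : Schur condition 1
  have stepC : ∀ x, A x ≤ C1 * ENNReal.ofReal ((1 + ‖x‖) ^ (-b)) := by
    intro x
    have hAeq : A x = ∫⁻ y, ENNReal.ofReal (κ x y * (1 + ‖y‖) ^ (-b)) := by
      apply lintegral_congr
      intro y
      rw [ENNReal.ofReal_mul (hκpos x y).le]
      congr 1
      rw [hhdef]
      rw [ENNReal.ofReal_rpow_of_pos (hwpos y)]
      congr 1
      rw [← Real.rpow_mul (by linarith [norm_nonneg y] : (0:ℝ) ≤ 1 + ‖y‖),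
        show -s * q = -b by rw [← hsq]; ring]
    rw [hAeq]
    refine (schur1 hb1 hb3 x).trans (le_of_eq ?_)
    have hbn : (0:ℝ) ≤ 1/(3-b)+1/(b-1) := by
      have h1 : (0:ℝ) < 3 - b := by linarith
      have h2 : (0:ℝ) < b - 1 := by linarith
      positivity
    rw [hC1def, ENNReal.ofReal_mul hbn, mul_assoc]
  -- Step D : Schur condition 2
  have hC2top : C2 ≠ ∞ := ENNReal.mul_ne_top sConst_ne_top ENNReal.ofReal_ne_top
  have stepD : ∀ y : E3, (∫⁻ x, ENNReal.ofReal ((1 + ‖x‖) ^ (-a)) * k x y) ≤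
      C2 * ENNReal.ofReal ((1 + ‖y‖) ^ (-a)) := by
    intro y
    have heq : (∫⁻ x, ENNReal.ofReal ((1 + ‖x‖) ^ (-a)) * k x y) =
        ∫⁻ x, ENNReal.ofReal (κ x y * (1 + ‖x‖) ^ (-a)) := by
      apply lintegral_congr
      intro x
      rw [ENNReal.ofReal_mul (hκpos x y).le, mul_comm]
    rw [heq]
    refine (schur2 ha0 ha2 y).trans (le_of_eq ?_)
    have han : (0:ℝ) ≤ 1/(3-(1+a))+1/((1+a)-1) := by
      have h1 : (0:ℝ) < 3 - (1+a) := by linarith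
      have h2 : (0:ℝ) < (1+a) - 1 := by linarith
      positivity
    rw [hC2def, ENNReal.ofReal_mul han, mul_assoc]
  -- Step E : assembly
  have hba : b * (p / q) = a := by
    rw [← hsq, ← hsp]
    field_simp
  have hpq0 : (0:ℝ) ≤ p / q := div_nonneg hp0.le hq0.le
  have hC1q : C1 ^ (p/q) ≠ ⊤ := ENNReal.rpow_ne_top_of_nonneg hpq0 hC1top
  have e1 : ∀ x : E3,
      (‖∫ y : E3, f y / (((1 + ‖x‖) * (1 + ‖x‖ + ‖y‖) ^ 2 : ℝ) : ℂ) ∂volume‖₊ : ℝ≥0∞) ^ p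
        ≤ (A x) ^ (p/q) * B x := by
    intro x
    calc (‖∫ y : E3, f y / (((1 + ‖x‖) * (1 + ‖x‖ + ‖y‖) ^ 2 : ℝ) : ℂ) ∂volume‖₊ : ℝ≥0∞) ^ p
        ≤ ((A x) ^ (1/q) * (B x) ^ (1/p)) ^ p :=
          ENNReal.rpow_le_rpow ((stepA x).trans (stepB x)) hp0.le
      _ = (A x) ^ (p/q) * B x := by
          rw [ENNReal.mul_rpow_of_nonneg _ _ hp0.le, ← ENNReal.rpow_mul, ← ENNReal.rpow_mul,
            show (1/q) * p = p/q by ring, show (1/p) * p = 1 by field_simp, ENNReal.rpow_one]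
  have e2 : ∀ x : E3, (A x) ^ (p/q) * B x ≤
      C1 ^ (p/q) * (ENNReal.ofReal ((1 + ‖x‖) ^ (-a)) * B x) := by
    intro x
    have h1 : (A x) ^ (p/q) ≤ (C1 * ENNReal.ofReal ((1 + ‖x‖) ^ (-b))) ^ (p/q) :=
      ENNReal.rpow_le_rpow (stepC x) hpq0
    have h2 : (C1 * ENNReal.ofReal ((1 + ‖x‖) ^ (-b))) ^ (p/q) =
        C1 ^ (p/q) * ENNReal.ofReal ((1 + ‖x‖) ^ (-a)) := by
      rw [ENNReal.mul_rpow_of_nonneg _ _ hpq0,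
        ENNReal.ofReal_rpow_of_pos (Real.rpow_pos_of_pos (by linarith [norm_nonneg x]) _),
        ← Real.rpow_mul (by linarith [norm_nonneg x] : (0:ℝ) ≤ 1 + ‖x‖),
        show (-b) * (p/q) = -a by rw [← hba]; ring]
    calc (A x) ^ (p/q) * B x ≤ (C1 * ENNReal.ofReal ((1 + ‖x‖) ^ (-b))) ^ (p/q) * B x :=
          mul_le_mul_left h1 _
      _ = C1 ^ (p/q) * (ENNReal.ofReal ((1 + ‖x‖) ^ (-a)) * B x) := by rw [h2, mul_assoc]
  have inner : (∫⁻ x, ENNReal.ofReal ((1 + ‖x‖) ^ (-a)) * B x) ≤ C2 * ∫⁻ y, F y ^ p := by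
    have swap : (∫⁻ x, ENNReal.ofReal ((1 + ‖x‖) ^ (-a)) * B x) =
        ∫⁻ y, ∫⁻ x, ENNReal.ofReal ((1 + ‖x‖) ^ (-a)) *
          (k x y * F y ^ p * ((h y)⁻¹) ^ p) := by
      have hrw : ∀ x, ENNReal.ofReal ((1 + ‖x‖) ^ (-a)) * B x =
          ∫⁻ y, ENNReal.ofReal ((1 + ‖x‖) ^ (-a)) * (k x y * F y ^ p * ((h y)⁻¹) ^ p) :=
        fun x => (lintegral_const_mul' _ _ ENNReal.ofReal_ne_top).symm
      rw [lintegral_congr hrw]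
      apply lintegral_lintegral_swap
      apply Measurable.aemeasurable
      apply Measurable.mul
      · fun_prop
      · apply Measurable.mul
        · apply Measurable.mul
          · exact hkmeas
          · fun_prop
        · fun_prop
    rw [swap]
    have inner2 : ∀ y : E3, (∫⁻ x, ENNReal.ofReal ((1 + ‖x‖) ^ (-a)) *
        (k x y * F y ^ p * ((h y)⁻¹) ^ p)) ≤ C2 * F y ^ p := by
      intro y
      have hcne : F y ^ p * ((h y)⁻¹) ^ p ≠ ⊤ :=
        ENNReal.mul_ne_top (ENNReal.rpow_ne_top_of_nonneg hp0.le ENNReal.coe_ne_top)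
          (ENNReal.rpow_ne_top_of_nonneg hp0.le (ENNReal.inv_ne_top.2 (hh0 y)))
      have hrw2 : ∀ x, ENNReal.ofReal ((1 + ‖x‖) ^ (-a)) *
          (k x y * F y ^ p * ((h y)⁻¹) ^ p) =
          (ENNReal.ofReal ((1 + ‖x‖) ^ (-a)) * k x y) * (F y ^ p * ((h y)⁻¹) ^ p) :=
        fun x => by ring
      rw [lintegral_congr hrw2, lintegral_mul_const' _ _ hcne]
      have hhp : ((h y)⁻¹) ^ p * ENNReal.ofReal ((1 + ‖y‖) ^ (-a)) = 1 := by
        rw [ENNReal.inv_rpow]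
        have hyp : (h y) ^ p = ENNReal.ofReal ((1 + ‖y‖) ^ (-a)) := by
          simp only [hhdef]
          rw [ENNReal.ofReal_rpow_of_pos (hwpos y),
            ← Real.rpow_mul (by linarith [norm_nonneg y] : (0:ℝ) ≤ 1 + ‖y‖),
            show -s * p = -a by rw [← hsp]; ring]
        rw [hyp]
        exact ENNReal.inv_mul_cancel
          (ENNReal.ofReal_pos.2 (Real.rpow_pos_of_pos (by linarith [norm_nonneg y]) _)).ne'
          ENNReal.ofReal_ne_top
      calc (∫⁻ x, ENNReal.ofReal ((1 + ‖x‖) ^ (-a)) * k x y) * (F y ^ p * ((h y)⁻¹) ^ p)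
          ≤ (C2 * ENNReal.ofReal ((1 + ‖y‖) ^ (-a))) * (F y ^ p * ((h y)⁻¹) ^ p) :=
            mul_le_mul_left (stepD y) _
        _ = C2 * F y ^ p * (((h y)⁻¹) ^ p * ENNReal.ofReal ((1 + ‖y‖) ^ (-a))) := by ring
        _ = C2 * F y ^ p := by rw [hhp, mul_one]
    calc (∫⁻ y, ∫⁻ x, ENNReal.ofReal ((1 + ‖x‖) ^ (-a)) *
          (k x y * F y ^ p * ((h y)⁻¹) ^ p))
        ≤ ∫⁻ y, C2 * F y ^ p := lintegral_mono inner2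
      _ = C2 * ∫⁻ y, F y ^ p := lintegral_const_mul' _ _ hC2top
  calc ∫⁻ x : E3, (‖∫ y : E3, f y / (((1 + ‖x‖) * (1 + ‖x‖ + ‖y‖) ^ 2 : ℝ) : ℂ) ∂volume‖₊ : ℝ≥0∞) ^ p
      ≤ ∫⁻ x, (A x) ^ (p/q) * B x := lintegral_mono e1
    _ ≤ ∫⁻ x, C1 ^ (p/q) * (ENNReal.ofReal ((1 + ‖x‖) ^ (-a)) * B x) := lintegral_mono e2
    _ = C1 ^ (p/q) * ∫⁻ x, ENNReal.ofReal ((1 + ‖x‖) ^ (-a)) * B x :=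
        lintegral_const_mul' _ _ hC1q
    _ ≤ C1 ^ (p/q) * (C2 * ∫⁻ y, F y ^ p) := mul_le_mul_right inner _


end Stmt9

open Stmt9 in
/-- The integral operator on ℝ³ with kernel `(1+|x|)⁻¹(1+|x|+|y|)⁻²` is bounded on
`Lᵖ(ℝ³)` for all `1 < p < 3`. -/
theorem stmt_9 (p : ℝ) (hp1 : 1 < p) (hp3 : p < 3) :
    ∃ C : ℝ≥0, ∀ f : EuclideanSpace ℝ (Fin 3) → ℂ, MemLp f (ENNReal.ofReal p) volume →
      eLpNorm (fun x : EuclideanSpace ℝ (Fin 3) => ∫ y : EuclideanSpace ℝ (Fin 3), f y / (((1 + ‖x‖) * (1 + ‖x‖ + ‖y‖) ^ 2 : ℝ) : ℂ) ∂volume)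
          (ENNReal.ofReal p) volume
        ≤ C * eLpNorm f (ENNReal.ofReal p) volume := by
  have hp0 : (0:ℝ) < p := by linarith
  set q : ℝ := p / (p - 1) with hqdef
  have hpq : p.HolderConjugate q := Real.HolderConjugate.conjExponent hp1
  have hq0 : 0 < q := hpq.symm.pos
  set b : ℝ := (1 + min 3 (2 / (p - 1))) / 2 with hbdef
  have hmin1 : (1:ℝ) < min 3 (2 / (p - 1)) :=
    lt_min (by norm_num) ((one_lt_div (by linarith)).2 (by linarith))
  have hb1 : 1 < b := by rw [hbdef]; linarith
  have hb3 : b < 3 := by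
    have : min 3 (2 / (p - 1)) ≤ 3 := min_le_left _ _
    rw [hbdef]; linarith
  set a : ℝ := b * (p - 1) with hadef
  have ha0 : 0 < a := mul_pos (by linarith) (by linarith)
  have ha2 : a < 2 := by
    have h2 : min 3 (2 / (p - 1)) ≤ 2 / (p - 1) := min_le_right _ _
    have hblt : b < 2 / (p - 1) := by rw [hbdef]; linarith
    calc a = b * (p - 1) := hadef
      _ < (2 / (p - 1)) * (p - 1) := by
          apply mul_lt_mul_of_pos_right hblt (by linarith)
      _ = 2 := div_mul_cancel₀ _ (by linarith)
  set s : ℝ := b / q with hsdef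
  have hs0 : 0 < s := div_pos (by linarith) hq0
  have hsq : s * q = b := div_mul_cancel₀ _ hq0.ne'
  have hsp : s * p = a := by
    rw [hsdef, hqdef, hadef]
    field_simp
  set K : ℝ≥0∞ := (sConst * ENNReal.ofReal (1/(3-b)+1/(b-1))) ^ (p/q) *
    (sConst * ENNReal.ofReal (1/(3-(1+a))+1/((1+a)-1))) with hKdef
  have hKtop : K ≠ ⊤ := by
    apply ENNReal.mul_ne_top
    · exact ENNReal.rpow_ne_top_of_nonneg (div_nonneg hp0.le hq0.le)
        (ENNReal.mul_ne_top sConst_ne_top ENNReal.ofReal_ne_top)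
    · exact ENNReal.mul_ne_top sConst_ne_top ENNReal.ofReal_ne_top
  have hKp : K ^ (1/p) ≠ ⊤ := ENNReal.rpow_ne_top_of_nonneg (by positivity) hKtop
  refine ⟨(K ^ (1/p)).toNNReal, ?_⟩
  intro f hf
  set g : EuclideanSpace ℝ (Fin 3) → ℂ := hf.1.mk f with hgdef
  have hgm : StronglyMeasurable g := hf.1.stronglyMeasurable_mk
  have hfg : f =ᵐ[volume] g := hf.1.ae_eq_mk
  have hTeq : (fun x : EuclideanSpace ℝ (Fin 3) => ∫ y : EuclideanSpace ℝ (Fin 3), f y / (((1 + ‖x‖) * (1 + ‖x‖ + ‖y‖) ^ 2 : ℝ) : ℂ) ∂volume)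
      = fun x : EuclideanSpace ℝ (Fin 3) => ∫ y : EuclideanSpace ℝ (Fin 3), g y / (((1 + ‖x‖) * (1 + ‖x‖ + ‖y‖) ^ 2 : ℝ) : ℂ) ∂volume := by
    funext x
    have hint : (fun y : EuclideanSpace ℝ (Fin 3) =>
        f y / (((1 + ‖x‖) * (1 + ‖x‖ + ‖y‖) ^ 2 : ℝ) : ℂ)) =ᵐ[volume]
        (fun y : EuclideanSpace ℝ (Fin 3) =>
        g y / (((1 + ‖x‖) * (1 + ‖x‖ + ‖y‖) ^ 2 : ℝ) : ℂ)) :=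
      hfg.mono fun y hy => by dsimp only; rw [hy]
    exact integral_congr_ae hint
  rw [hTeq, eLpNorm_congr_ae hfg]
  have hP0 : (ENNReal.ofReal p) ≠ 0 := by
    simp only [ne_eq, ENNReal.ofReal_eq_zero, not_le]
    linarith
  have hPt : (ENNReal.ofReal p) ≠ ⊤ := ENNReal.ofReal_ne_top
  rw [eLpNorm_eq_lintegral_rpow_enorm_toReal hP0 hPt, eLpNorm_eq_lintegral_rpow_enorm_toReal hP0 hPt,
    ENNReal.toReal_ofReal hp0.le]
  have hkey := key hp0 hpq.symm hb1 hb3 ha0 ha2 hs0 hsq hsp g hgm.measurable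
  calc (∫⁻ x : EuclideanSpace ℝ (Fin 3), (‖∫ y : EuclideanSpace ℝ (Fin 3), g y / (((1 + ‖x‖) * (1 + ‖x‖ + ‖y‖) ^ 2 : ℝ) : ℂ) ∂volume‖₊ : ℝ≥0∞) ^ p) ^ (1/p)
      ≤ (K * ∫⁻ y : EuclideanSpace ℝ (Fin 3), (‖g y‖₊ : ℝ≥0∞) ^ p) ^ (1/p) := by
        apply ENNReal.rpow_le_rpow _ (by positivity)
        rw [hKdef, mul_assoc]
        exact hkey
    _ = K ^ (1/p) * (∫⁻ y : EuclideanSpace ℝ (Fin 3), (‖g y‖₊ : ℝ≥0∞) ^ p) ^ (1/p) :=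
        ENNReal.mul_rpow_of_nonneg _ _ (by positivity)
    _ = ↑(K ^ (1/p)).toNNReal * (∫⁻ y : EuclideanSpace ℝ (Fin 3), (‖g y‖₊ : ℝ≥0∞) ^ p) ^ (1/p) := by
        rw [ENNReal.coe_toNNReal hKp]

end
end

section
/- Let H be a Hilbert space, A a closed operator and S a bounded projection on H such that A + S has a bounded inverse. Then A has a bounded inverse if and only if a := S − S(A+S)^{−1}S has a bounded inverse as an operator on SH, and in that case A^{−1} = (A+S)^{−1} + (A+S)^{−1} S a^{−1} S (A+S)^{−1}. -/
/-!
Write `B = (A + S)⁻¹` and `a = S - S B S` on the range of `S`. If `A⁻¹` exists, then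
`A⁻¹ - B = A⁻¹ S B`, and from this one checks that `S + S A⁻¹ S` inverts `a` on `SH`.
Conversely, if `b` inverts `a` on `SH`, a direct computation shows that `B + B S b S B` is a
two-sided inverse of `A`; it is bounded because `B`, `S` and `b` are.
-/

namespace JensenNenciu

variable {R E F : Type*} [Ring R] [AddCommGroup E] [Module R E] [FunLike F E E]
  {A : E →ₗ.[R] E} {S B T b : F}

lemma apply_inv_add_apply (hAB : ∀ y, ∃ hy : B y ∈ A.domain, A ⟨B y, hy⟩ + S (B y) = y)
    {y : E} (hy : B y ∈ A.domain) : A ⟨B y, hy⟩ = y - S (B y) := by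
  obtain ⟨_, h⟩ := hAB y
  exact eq_sub_of_add_eq h

lemma apply_inverse_formula (hAB : ∀ y, ∃ hy : B y ∈ A.domain, A ⟨B y, hy⟩ + S (B y) = y)
    (hb : ∀ y, S (b (S y)) - S (B (S (b (S y)))) = S y) (y : E) :
    ∃ hy : B y + B (S (b (S (B y)))) ∈ A.domain, A ⟨B y + B (S (b (S (B y)))), hy⟩ = y := by
  obtain ⟨hy, -⟩ := hAB y
  obtain ⟨hw, -⟩ := hAB (S (b (S (B y))))
  refine ⟨A.domain.add_mem hy hw, ?_⟩
  have hsplit : A ⟨_, A.domain.add_mem hy hw⟩ = A ⟨B y, hy⟩ + A ⟨_, hw⟩ :=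
    A.map_add ⟨B y, hy⟩ ⟨_, hw⟩
  calc A ⟨_, A.domain.add_mem hy hw⟩
      = y - S (B y) + (S (b (S (B y))) - S (B (S (b (S (B y)))))) := by
        rw [hsplit, apply_inv_add_apply hAB, apply_inv_add_apply hAB]
    _ = y := by rw [hb, sub_add_cancel]

lemma schurInv_eq_proj_comp (hS : ∀ x, S (S x) = S x) (hb : ∀ y, b y = S (S y + T (S y)))
    (y : E) : b y = S (b (S y)) := by
  simp only [hb, hS]

variable [AddMonoidHomClass F E E]

lemma inv_add_apply_apply (hBA : ∀ x : A.domain, B (A x + S x) = x) (x : A.domain) :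
    B (A x) = x - B (S x) :=
  eq_sub_of_add_eq (by rw [← map_add, hBA])

lemma inverse_formula_apply_apply (hS : ∀ x, S (S x) = S x)
    (hBA : ∀ x : A.domain, B (A x + S x) = x) (hb : ∀ y, b (S y - S (B (S y))) = S y)
    (x : A.domain) : B (A x) + B (S (b (S (B (A x))))) = x := by
  have hSBA : S (B (A x)) = S x - S (B (S x)) := by
    rw [inv_add_apply_apply hBA, map_sub]
  rw [hSBA, hb, hS, inv_add_apply_apply hBA, sub_add_cancel]

lemma schurInv_apply_schur (hS : ∀ x, S (S x) = S x) (hb : ∀ y, b y = S (S y + T (S y)))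
    (hAB : ∀ y, ∃ hy : B y ∈ A.domain, A ⟨B y, hy⟩ + S (B y) = y)
    (hT : ∀ x : A.domain, T (A x) = x) (y : E) : b (S y - S (B (S y))) = S y := by
  obtain ⟨hu, -⟩ := hAB (S y)
  have hTu : T (S y - S (B (S y))) = B (S y) := by
    rw [← apply_inv_add_apply hAB hu]
    exact hT ⟨B (S y), hu⟩
  have hSu : S (S y - S (B (S y))) = S y - S (B (S y)) := by rw [map_sub, hS, hS]
  rw [hb, hSu, hTu, map_add, hSu, sub_add_cancel]

lemma schur_apply_schurInv (hS : ∀ x, S (S x) = S x) (hb : ∀ y, b y = S (S y + T (S y)))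
    (hBA : ∀ x : A.domain, B (A x + S x) = x)
    (hT : ∀ y, ∃ hy : T y ∈ A.domain, A ⟨T y, hy⟩ = y) (y : E) :
    S (b (S y)) - S (B (S (b (S y)))) = S y := by
  obtain ⟨hv, hAv⟩ := hT (S y)
  have hBv : B (S y + S (T (S y))) = T (S y) := by
    simpa only [hAv] using hBA ⟨T (S y), hv⟩
  rw [← schurInv_eq_proj_comp hS hb, hb, map_add S, hS, hBv, add_sub_cancel_right]

end JensenNenciu

open JensenNenciu in
theorem stmt_12_general {H : Type*} [NormedAddCommGroup H] [InnerProductSpace ℂ H]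
    (A : H →ₗ.[ℂ] H)
    (S : H →L[ℂ] H) (hS : ∀ x, S (S x) = S x)
    (B : H →L[ℂ] H)
    (hBA : ∀ x : A.domain, B (A x + S x) = (x : H))
    (hAB : ∀ y : H, ∃ hy : B y ∈ A.domain, A ⟨B y, hy⟩ + S (B y) = y) :
    ((∃ R : H →L[ℂ] H, (∀ x : A.domain, R (A x) = (x : H)) ∧
        ∀ y : H, ∃ hy : R y ∈ A.domain, A ⟨R y, hy⟩ = y)
      ↔ ∃ b : H →L[ℂ] H, (∀ y, b y = S (b (S y))) ∧
          (∀ y, b (S y - S (B (S y))) = S y) ∧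
          (∀ y, S (b (S y)) - S (B (S (b (S y)))) = S y))
    ∧ ∀ b : H →L[ℂ] H, (∀ y, b y = S (b (S y))) →
        (∀ y, b (S y - S (B (S y))) = S y) →
        (∀ y, S (b (S y)) - S (B (S (b (S y)))) = S y) →
        (∀ x : A.domain, B (A x) + B (S (b (S (B (A x))))) = (x : H)) ∧
        ∀ y : H, ∃ hy : B y + B (S (b (S (B y)))) ∈ A.domain,
          A ⟨B y + B (S (b (S (B y)))), hy⟩ = y := by
  refine ⟨⟨?_, ?_⟩, fun b _ hb₂ hb₃ =>
    ⟨inverse_formula_apply_apply hS hBA hb₂, apply_inverse_formula hAB hb₃⟩⟩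
  · rintro ⟨T, hT₁, hT₂⟩
    obtain ⟨b, hb⟩ : ∃ b : H →L[ℂ] H, ∀ y, b y = S (S y + T (S y)) :=
      ⟨S ∘L (.id ℂ H + T) ∘L S, fun _ => rfl⟩
    exact ⟨b, schurInv_eq_proj_comp hS hb,
      schurInv_apply_schur hS hb hAB hT₁,
      schur_apply_schurInv hS hb hBA hT₂⟩
  · rintro ⟨b, -, hb₂, hb₃⟩
    exact ⟨B + B ∘L S ∘L b ∘L S ∘L B, inverse_formula_apply_apply hS hBA hb₂,
      apply_inverse_formula hAB hb₃⟩

/-- Jensen–Nenciu inversion lemma: let `A` be a closed (possibly unbounded) operator and `S`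
a bounded projection on a Hilbert space `H` such that `A + S` has a bounded inverse `B`.
Then `A` has a bounded inverse iff `a := S − S(A+S)⁻¹S` has a bounded inverse on `SH`, and
in that case `A⁻¹ = (A+S)⁻¹ + (A+S)⁻¹ S a⁻¹ S (A+S)⁻¹`. -/
theorem stmt_12 {H : Type*} [NormedAddCommGroup H] [InnerProductSpace ℂ H] [CompleteSpace H]
    (A : H →ₗ.[ℂ] H) (hAclosed : IsClosed (A.graph : Set (H × H)))
    (S : H →L[ℂ] H) (hS : ∀ x, S (S x) = S x)
    (B : H →L[ℂ] H)
    (hBA : ∀ x : A.domain, B (A x + S x) = (x : H))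
    (hAB : ∀ y : H, ∃ hy : B y ∈ A.domain, A ⟨B y, hy⟩ + S (B y) = y) :
    ((∃ R : H →L[ℂ] H, (∀ x : A.domain, R (A x) = (x : H)) ∧
        ∀ y : H, ∃ hy : R y ∈ A.domain, A ⟨R y, hy⟩ = y)
      ↔ ∃ b : H →L[ℂ] H, (∀ y, b y = S (b (S y))) ∧
          (∀ y, b (S y - S (B (S y))) = S y) ∧
          (∀ y, S (b (S y)) - S (B (S (b (S y)))) = S y))
    ∧ ∀ b : H →L[ℂ] H, (∀ y, b y = S (b (S y))) →
        (∀ y, b (S y - S (B (S y))) = S y) →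
        (∀ y, S (b (S y)) - S (B (S (b (S y)))) = S y) →
        (∀ x : A.domain, B (A x) + B (S (b (S (B (A x))))) = (x : H)) ∧
        ∀ y : H, ∃ hy : B y + B (S (b (S (B y)))) ∈ A.domain,
          A ⟨B y + B (S (b (S (B y)))), hy⟩ = y :=
  stmt_12_general A S hS B hBA hAB
end

section
/- Let T be a bounded self-adjoint operator on L²(ℝ³), v ∈ L²(ℝ³) real-valued with V := v² ∈ L¹(ℝ³) and ‖V‖_{L¹} > 0, S₁ a finite-rank orthogonal projection with S₁v = 0 and range orthogonal to v, and suppose T₁ := S₁TPTS₁ + A with P := ‖V‖_{L¹}^{−1} ⟨·, v⟩ v, where A is a nonnegative self-adjoint operator commuting with S₁ (A = S₁AS₁, ⟨Af, f⟩ ≥ 0), and 𝒟₁ is a bounded self-adjoint operator on S₁L² with (T₁ + S₂)𝒟₁S₁Tv = S₁Tv for some orthogonal projection S₂ ≤ S₁ contained in A. Then 1 − ‖V‖_{L¹}^{−1} ⟨𝒟₁Tv, Tv⟩ ≥ 0. -/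
open MeasureTheory
open scoped NNReal ENNReal

local notation "H2" => Lp ℂ 2 (volume : Measure (EuclideanSpace ℝ (Fin 3)))

set_option maxHeartbeats 1000000 in
/-- Positivity `1 − ‖V‖_{L¹}⁻¹ ⟨𝒟₁Tv, Tv⟩ ≥ 0` in the setting of the paper: `T` bounded
self-adjoint on `L²(ℝ³)`, `v` real-valued with `‖V‖_{L¹} = ∫|v|² > 0`, `S₁` a finite-rank
orthogonal projection killing `v` with range orthogonal to `v`,
`T₁ = S₁TPTS₁ + A` with `P = ‖V‖⁻¹⟨·,v⟩v` and `A` nonnegative self-adjoint commuting with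
`S₁`, `S₂ ≤ S₁` an orthogonal projection contained in `A`, and `𝒟₁` bounded self-adjoint on
`S₁L²` with `(T₁+S₂)𝒟₁S₁Tv = S₁Tv`. -/
theorem stmt_13
    (v : H2)
    (hv_real : ∀ᵐ x ∂(volume : Measure (EuclideanSpace ℝ (Fin 3))), (v x).im = 0)
    (W : ℝ) (hW : W = ∫ x, ‖v x‖ ^ 2 ∂(volume : Measure (EuclideanSpace ℝ (Fin 3))))
    (hWpos : 0 < W)
    (T : H2 →L[ℂ] H2) (hT : IsSelfAdjoint T)
    (S₁ : H2 →L[ℂ] H2) (hS₁sa : IsSelfAdjoint S₁) (hS₁proj : ∀ f, S₁ (S₁ f) = S₁ f)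
    (hS₁fin : FiniteDimensional ℂ (LinearMap.range (S₁ : H2 →ₗ[ℂ] H2)))
    (hS₁v : S₁ v = 0) (hS₁orth : ∀ f, (inner ℂ v (S₁ f) : ℂ) = 0)
    (P : H2 →L[ℂ] H2) (hP : ∀ f, P f = ((W : ℂ))⁻¹ • ((inner ℂ v f : ℂ) • v))
    (A : H2 →L[ℂ] H2) (hAsa : IsSelfAdjoint A)
    (hAnonneg : ∀ f, 0 ≤ (inner ℂ f (A f) : ℂ).re)
    (hAcomm : ∀ f, A f = S₁ (A (S₁ f)))
    (T₁ : H2 →L[ℂ] H2) (hT₁ : ∀ f, T₁ f = S₁ (T (P (T (S₁ f)))) + A f)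
    (S₂ : H2 →L[ℂ] H2) (hS₂sa : IsSelfAdjoint S₂) (hS₂proj : ∀ f, S₂ (S₂ f) = S₂ f)
    (hS₂S₁ : ∀ f, S₁ (S₂ f) = S₂ f)
    (hS₂A : ∀ f, ‖S₂ f‖ ^ 2 ≤ (inner ℂ f (A f) : ℂ).re)
    (D₁ : H2 →L[ℂ] H2) (hD₁sa : IsSelfAdjoint D₁) (hD₁S : ∀ f, D₁ f = S₁ (D₁ (S₁ f)))
    (hD₁inv : T₁ (D₁ (T v)) + S₂ (D₁ (T v)) = S₁ (T v)) :
    0 ≤ 1 - W⁻¹ * (inner ℂ (T v) (D₁ (T v)) : ℂ).re := by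
  have hsymT : ∀ x y : H2, (inner ℂ (T x) y : ℂ) = inner ℂ x (T y) :=
    fun x y => (ContinuousLinearMap.isSelfAdjoint_iff_isSymmetric.mp hT) x y
  have hsymS₁ : ∀ x y : H2, (inner ℂ (S₁ x) y : ℂ) = inner ℂ x (S₁ y) :=
    fun x y => (ContinuousLinearMap.isSelfAdjoint_iff_isSymmetric.mp hS₁sa) x y
  have hsymS₂ : ∀ x y : H2, (inner ℂ (S₂ x) y : ℂ) = inner ℂ x (S₂ y) :=
    fun x y => (ContinuousLinearMap.isSelfAdjoint_iff_isSymmetric.mp hS₂sa) x y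
  have hsymD₁ : ∀ x y : H2, (inner ℂ (D₁ x) y : ℂ) = inner ℂ x (D₁ y) :=
    fun x y => (ContinuousLinearMap.isSelfAdjoint_iff_isSymmetric.mp hD₁sa) x y
  set η := D₁ (T v) with hηdef
  set ξ := S₁ (T v) with hξdef
  have hη : S₁ η = η := by
    rw [hηdef, hD₁S (T v), hS₁proj]
  set c : ℂ := inner ℂ (T v) η with hc
  have hconj : (starRingEnd ℂ) c = c := by
    rw [hc, inner_conj_symm]
    exact hsymD₁ (T v) (T v)
  set r : ℝ := c.re with hr
  have hcr : ((r : ℂ)) = c := Complex.conj_eq_iff_re.mp hconj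
  have hηξ : (inner ℂ η ξ : ℂ) = c := by
    rw [hξdef, ← hsymS₁ η (T v), hη, ← inner_conj_symm, ← hc, hconj]
  have hvTη : (inner ℂ v (T η) : ℂ) = c := by
    rw [← hsymT v η, ← hc]
  have key : (inner ℂ η (T₁ η) : ℂ) + inner ℂ η (S₂ η) = c := by
    rw [← inner_add_right, hD₁inv, hηξ]
  have hT₁η : (inner ℂ η (T₁ η) : ℂ) = (W : ℂ)⁻¹ * c * c + inner ℂ η (A η) := by
    rw [hT₁ η, hη, inner_add_right]
    congr 1
    rw [hP (T η), hvTη]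
    rw [ContinuousLinearMap.map_smul, ContinuousLinearMap.map_smul,
      ContinuousLinearMap.map_smul, ContinuousLinearMap.map_smul,
      inner_smul_right, inner_smul_right, ← hξdef, hηξ]
    ring
  have hS₂η : (inner ℂ η (S₂ η) : ℂ) = ((‖S₂ η‖ ^ 2 : ℝ) : ℂ) := by
    conv_lhs => rw [← hS₂proj η]
    rw [← hsymS₂ η (S₂ η), inner_self_eq_norm_sq_to_K]
    norm_cast
  rw [hT₁η, hS₂η, ← hcr] at key
  have h1 : (W : ℂ)⁻¹ * (r : ℂ) * (r : ℂ) = ((W⁻¹ * r * r : ℝ) : ℂ) := by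
    push_cast; ring
  rw [h1] at key
  have keyre := congrArg Complex.re key
  simp only [Complex.add_re, Complex.ofReal_re] at keyre
  have hA := hAnonneg η
  have hN : (0 : ℝ) ≤ ‖S₂ η‖ ^ 2 := sq_nonneg _
  have hineq : W⁻¹ * r * r ≤ r := by linarith
  rcases le_or_gt r 0 with h | h
  · have : W⁻¹ * r ≤ 0 := mul_nonpos_of_nonneg_of_nonpos (inv_nonneg.mpr hWpos.le) h
    linarith
  · nlinarith [inv_pos.mpr hWpos]
end

section
/- For w, z ∈ ℝ³ \ {0}, the one-dimensional integral ∫₀^∞ s² (s⁴ + (|w|²+|z|²)s² + |w|²|z|²)^{−2} ds is bounded above by C / (|w||z|(|w|+|z|)³) for an absolute constant C. -/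
open MeasureTheory Real
open scoped NNReal ENNReal


lemma aux_int (a : ℝ) (ha : 0 < a) :
    ∫⁻ s in Set.Ioi (0 : ℝ), ENNReal.ofReal ((s ^ 2 + a ^ 2)⁻¹)
      = ENNReal.ofReal (π / (2 * a)) := by
  have hderiv : ∀ x ∈ Set.Ici (0:ℝ),
      HasDerivAt (fun s : ℝ => a⁻¹ * arctan (s / a)) ((x ^ 2 + a ^ 2)⁻¹) x := by
    intro x _
    have h1 : HasDerivAt (fun s : ℝ => s / a) a⁻¹ x := by simpa using (hasDerivAt_id x).div_const a
    have h2 := (Real.hasDerivAt_arctan (x / a)).comp x h1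
    have h3 := h2.const_mul a⁻¹
    refine h3.congr_deriv ?_
    field_simp
    ring
  have hnonneg : ∀ x ∈ Set.Ioi (0:ℝ), 0 ≤ (x ^ 2 + a ^ 2)⁻¹ := by
    intro x _; positivity
  have htend : Filter.Tendsto (fun s : ℝ => a⁻¹ * arctan (s / a)) Filter.atTop
      (nhds (a⁻¹ * (π / 2))) := by
    exact ((Real.tendsto_arctan_atTop.comp
      (Filter.Tendsto.atTop_div_const ha Filter.tendsto_id)).mono_right
      nhdsWithin_le_nhds).const_mul a⁻¹
  have hint : IntegrableOn (fun x : ℝ => (x ^ 2 + a ^ 2)⁻¹) (Set.Ioi 0) :=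
    integrableOn_Ioi_deriv_of_nonneg' hderiv hnonneg htend
  have heq : ∫ x in Set.Ioi (0:ℝ), (x ^ 2 + a ^ 2)⁻¹
      = a⁻¹ * (π / 2) - a⁻¹ * arctan (0 / a) :=
    integral_Ioi_of_hasDerivAt_of_nonneg' hderiv hnonneg htend
  rw [← ofReal_integral_eq_lintegral_ofReal hint
      (Filter.Eventually.of_forall fun x => by positivity), heq]
  simp [arctan_zero]
  ring_nf

lemma key (a b : ℝ) (ha : 0 < a) (hb : 0 < b) (hab : a ≤ b) :
    ∫⁻ s in Set.Ioi (0 : ℝ),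
        ENNReal.ofReal (s ^ 2 / (s ^ 4 + (a ^ 2 + b ^ 2) * s ^ 2 + a ^ 2 * b ^ 2) ^ 2)
      ≤ ENNReal.ofReal (4 * π / (a * b * (a + b) ^ 3)) := by
  have step1 : ∫⁻ s in Set.Ioi (0 : ℝ),
        ENNReal.ofReal (s ^ 2 / (s ^ 4 + (a ^ 2 + b ^ 2) * s ^ 2 + a ^ 2 * b ^ 2) ^ 2)
      ≤ ∫⁻ s in Set.Ioi (0 : ℝ),
        ENNReal.ofReal ((b ^ 4)⁻¹) * ENNReal.ofReal ((s ^ 2 + a ^ 2)⁻¹) := by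
    refine lintegral_mono fun s => ?_
    rw [← ENNReal.ofReal_mul (by positivity)]
    refine ENNReal.ofReal_le_ofReal ?_
    have hD : (0:ℝ) < s ^ 4 + (a ^ 2 + b ^ 2) * s ^ 2 + a ^ 2 * b ^ 2 := by positivity
    rw [div_le_iff₀ (by positivity)]
    have h1 : s ^ 2 ≤ s ^ 2 + a ^ 2 := by nlinarith
    have h2 : b ^ 4 ≤ (s ^ 2 + b ^ 2) ^ 2 := by nlinarith [sq_nonneg s, sq_nonneg (s^2)]
    have hfac : s ^ 4 + (a ^ 2 + b ^ 2) * s ^ 2 + a ^ 2 * b ^ 2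
        = (s ^ 2 + a ^ 2) * (s ^ 2 + b ^ 2) := by ring
    rw [hfac]
    have hb4 : (0:ℝ) < b ^ 4 := by positivity
    have hsa : (0:ℝ) < s ^ 2 + a ^ 2 := by positivity
    have hsb : (0:ℝ) < s ^ 2 + b ^ 2 := by positivity
    have key : s ^ 2 * (b ^ 4 * (s ^ 2 + a ^ 2)) ≤ ((s ^ 2 + a ^ 2) * (s ^ 2 + b ^ 2)) ^ 2 := by
      nlinarith [mul_le_mul h1 h2 hb4.le hsa.le, sq_nonneg (s^2+a^2)]
    calc s ^ 2 = s ^ 2 * (b ^ 4 * (s ^ 2 + a ^ 2)) * ((b^4)⁻¹ * (s^2+a^2)⁻¹) := by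
          field_simp
      _ ≤ ((s ^ 2 + a ^ 2) * (s ^ 2 + b ^ 2)) ^ 2 * ((b^4)⁻¹ * (s^2+a^2)⁻¹) := by
          apply mul_le_mul_of_nonneg_right key; positivity
      _ = (b ^ 4)⁻¹ * (s ^ 2 + a ^ 2)⁻¹ * ((s ^ 2 + a ^ 2) * (s ^ 2 + b ^ 2)) ^ 2 := by ring
  rw [lintegral_const_mul' _ _ ENNReal.ofReal_ne_top, aux_int a ha,
    ← ENNReal.ofReal_mul (by positivity)] at step1
  refine step1.trans (ENNReal.ofReal_le_ofReal ?_)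
  have hrw : (b ^ 4)⁻¹ * (π / (2 * a)) = π / (2 * a * b ^ 4) := by
    rw [inv_mul_eq_div, div_div]
  rw [hrw, div_le_div_iff₀ (by positivity) (by positivity)]
  have hcube : (a + b) ^ 3 ≤ 8 * b ^ 3 := by
    calc (a + b) ^ 3 ≤ (2 * b) ^ 3 := pow_le_pow_left₀ (by positivity) (by linarith) 3
      _ = 8 * b ^ 3 := by ring
  nlinarith [pi_pos, mul_pos ha hb, mul_le_mul_of_nonneg_left hcube
    (by positivity : (0:ℝ) ≤ π * (a * b))]

/-- For nonzero `w, z ∈ ℝ³`: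
`∫₀^∞ s² (s⁴ + (|w|²+|z|²)s² + |w|²|z|²)⁻² ds ≤ C / (|w||z|(|w|+|z|)³)`
with an absolute constant `C`. -/
theorem stmt_19 :
    ∃ C : ℝ, ∀ w z : EuclideanSpace ℝ (Fin 3), w ≠ 0 → z ≠ 0 →
      ∫⁻ s in Set.Ioi (0 : ℝ),
          ENNReal.ofReal (s ^ 2 / (s ^ 4 + (‖w‖ ^ 2 + ‖z‖ ^ 2) * s ^ 2 + ‖w‖ ^ 2 * ‖z‖ ^ 2) ^ 2)
        ≤ ENNReal.ofReal (C / (‖w‖ * ‖z‖ * (‖w‖ + ‖z‖) ^ 3)) := by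
  refine ⟨4 * π, fun w z hw hz => ?_⟩
  have ha : 0 < ‖w‖ := norm_pos_iff.mpr hw
  have hb : 0 < ‖z‖ := norm_pos_iff.mpr hz
  rcases le_total ‖w‖ ‖z‖ with h | h
  · exact key ‖w‖ ‖z‖ ha hb h
  · have := key ‖z‖ ‖w‖ hb ha h
    have e1 : ‖z‖ ^ 2 + ‖w‖ ^ 2 = ‖w‖ ^ 2 + ‖z‖ ^ 2 := by ring
    have e2 : ‖z‖ ^ 2 * ‖w‖ ^ 2 = ‖w‖ ^ 2 * ‖z‖ ^ 2 := by ring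
    have e3 : ‖z‖ * ‖w‖ * (‖z‖ + ‖w‖) ^ 3 = ‖w‖ * ‖z‖ * (‖w‖ + ‖z‖) ^ 3 := by ring
    rwa [e1, e2, e3] at this
end
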